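/- arXiv:2604.00450 — 11 statements merged into one kernel-verified Lean document; each statement's English description precedes it below -/
import Mathlib

section
/- Let $k$ be an algebraically closed field of characteristic $0$, let $A$ be a connected $\mathbb{N}$-graded finitely presented $k$-algebra generated in degree $1$, let $g$ be a homogeneous normal element of $A$ of degree $n$, and let $P = \bigoplus_{i=0}^{d} P_i$ be a truncated point module of length $d+1$ over $A$. Then for every $i$ with $1 \leq i \leq d-n$ and all nonzero $m_{i-1} \in P_{i-1}$ and nonzero $m_i \in P_i$: $g \cdot m_{i-1} = 0$ holds if and only if $g \cdot m_i = 0$ holds. -/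
/-- `A` (with grading `𝒜 : ℕ → Submodule k A`) is a connected `ℕ`-graded finitely
presented `k`-algebra generated in degree `1`: `A₀ = k`, `dim_k A₁ < ∞`, `A` is
generated by `A₁` (so `A_{i+1} = A_i · A₁`), and `A` is presented by the tensor
algebra on `A₁` modulo a two-sided ideal generated by finitely many homogeneous
elements of degree `≥ 2`. -/
def IsConnGradedFP {k A : Type*} [Field k] [Ring A] [Algebra k A]
    (𝒜 : ℕ → Submodule k A) : Prop :=
  𝒜 0 = 1 ∧ FiniteDimensional k (𝒜 1) ∧ (∀ i : ℕ, 𝒜 (i + 1) = 𝒜 i * 𝒜 1) ∧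
    Function.Surjective (TensorAlgebra.lift k (𝒜 1).subtype) ∧
    ∃ s : Finset (TensorAlgebra k (𝒜 1)),
      (∀ r ∈ s, ∃ i : ℕ, 2 ≤ i ∧
        r ∈ (LinearMap.range (TensorAlgebra.ι k (M := ↥(𝒜 1))) ^ i :
          Submodule k (TensorAlgebra k ↥(𝒜 1)))) ∧
      ∀ z : TensorAlgebra k ↥(𝒜 1),
        TensorAlgebra.lift k (𝒜 1).subtype z = 0 ↔
          z ∈ TwoSidedIdeal.span (s : Set (TensorAlgebra k ↥(𝒜 1)))


open DirectSum in
lemma aux_key {k A : Type*} [Field k] [Ring A] [Algebra k A]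
    (𝒜 : ℕ → Submodule k A) [GradedAlgebra 𝒜]
    (hA0 : 𝒜 0 = 1) (hA3 : ∀ i : ℕ, 𝒜 (i + 1) = 𝒜 i * 𝒜 1)
    {P : Type*} [AddCommGroup P] [Module k P] [Module A P] [IsScalarTower k A P]
    (ℳ : ℤ → Submodule k P) [DirectSum.Decomposition ℳ]
    (hsmul : ∀ (i : ℕ) (j : ℤ) (a : A) (p : P), a ∈ 𝒜 i → p ∈ ℳ j → a • p ∈ ℳ (i + j))
    (hgen : Submodule.span A ((ℳ 0 : Submodule k P) : Set P) = ⊤)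
    (t : ℕ) (m : P) (hmem : m ∈ ℳ (t : ℤ)) (hspan : ℳ (t : ℤ) ≤ Submodule.span k {m})
    (p : P) (hp : p ∈ ℳ ((t : ℤ) + 1)) :
    ∃ x ∈ 𝒜 1, p = x • m := by
  classical
  have hcomm : ∀ (c : k) (a : A) (q : P), a • (c • q) = c • (a • q) := by
    intro c a q
    rw [← algebraMap_smul A c q, ← mul_smul, ← Algebra.commutes, mul_smul, algebraMap_smul]
  have hpow : ∀ u : ℕ, 𝒜 (u + 1) = 𝒜 1 * 𝒜 u := by
    intro u; induction u with
    | zero => rw [hA3 0, hA0, one_mul, mul_one]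
    | succ v ih => rw [hA3 (v + 1), ih, mul_assoc, ← hA3 v, ih]
  set K : ℕ → Submodule k P :=
    fun u => Submodule.span k {q | ∃ a ∈ 𝒜 u, ∃ m0 ∈ ℳ 0, q = a • m0} with hKdef
  have hKle : ∀ u : ℕ, K u ≤ ℳ (u : ℤ) := by
    intro u
    apply Submodule.span_le.mpr
    rintro q ⟨a, ha, m0, hm0, rfl⟩
    simpa using hsmul u 0 a m0 ha hm0
  have hsmulQ : ∀ (a : A) (x : P), x ∈ (⨆ u : ℕ, K u) → a • x ∈ (⨆ u : ℕ, K u) := by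
    intro a x hx
    refine Submodule.iSup_induction K (motive := fun y => a • y ∈ ⨆ u : ℕ, K u) hx ?_ (by simp) ?_
    · intro u y hy
      simp only [hKdef] at hy
      induction hy using Submodule.span_induction with
      | mem q hq =>
        obtain ⟨a', ha', m0, hm0, rfl⟩ := hq
        rw [← mul_smul]
        have heq : (a * a') • m0 = ∑ v ∈ (DirectSum.decompose 𝒜 a).support,
            ((DirectSum.decompose 𝒜 a v : A) * a') • m0 := by
          conv_lhs => rw [← DirectSum.sum_support_decompose 𝒜 a]
          rw [Finset.sum_mul, Finset.sum_smul]
        rw [heq]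
        apply Submodule.sum_mem
        intro v _
        refine Submodule.mem_iSup_of_mem (v + u) (Submodule.subset_span ?_)
        exact ⟨_, SetLike.mul_mem_graded (SetLike.coe_mem _) ha', m0, hm0, rfl⟩
      | zero => simp
      | add y z hy' hz' ihy ihz => rw [smul_add]; exact add_mem ihy ihz
      | smul c q hq ih => rw [hcomm]; exact Submodule.smul_mem _ _ ih
    · intro y z hy hz
      rw [smul_add]; exact add_mem hy hz
  have hQ : ∀ q : P, q ∈ (⨆ u : ℕ, K u) := by
    intro q
    have hq : q ∈ Submodule.span A ((ℳ 0 : Submodule k P) : Set P) := by rw [hgen]; trivial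
    induction hq using Submodule.span_induction with
    | mem x hx =>
      refine Submodule.mem_iSup_of_mem 0 (Submodule.subset_span ?_)
      exact ⟨1, SetLike.one_mem_graded 𝒜, x, hx, (one_smul A x).symm⟩
    | zero => exact zero_mem _
    | add x y _ _ hx hy => exact add_mem hx hy
    | smul a x _ hx => exact hsmulQ a x hx
  have hpK : p ∈ K (t + 1) := by
    have h1 : ((DirectSum.decompose ℳ p ((t : ℤ) + 1) : ℳ ((t : ℤ) + 1)) : P) ∈ K (t + 1) := by
      refine Submodule.iSup_induction K
        (motive := fun y => ((DirectSum.decompose ℳ y ((t : ℤ) + 1) : ℳ ((t : ℤ) + 1)) : P) ∈ K (t + 1))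
        (hQ p) ?_ ?_ ?_
      · intro u y hy
        by_cases h : (u : ℤ) = (t : ℤ) + 1
        · have hu : u = t + 1 := by exact_mod_cast h
          rw [DirectSum.decompose_of_mem_same ℳ (show y ∈ ℳ ((t : ℤ) + 1) from h ▸ hKle u hy)]
          exact hu ▸ hy
        · rw [DirectSum.decompose_of_mem_ne ℳ (hKle u hy) h]
          exact zero_mem _
      · show ((DirectSum.decompose ℳ (0 : P) ((t : ℤ) + 1) : ℳ ((t : ℤ) + 1)) : P) ∈ K (t + 1)
        rw [DirectSum.decompose_zero, DirectSum.zero_apply, ZeroMemClass.coe_zero]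
        exact zero_mem _
      · intro y z hy hz
        rw [DirectSum.decompose_add, DirectSum.add_apply, Submodule.coe_add]
        exact add_mem hy hz
    rwa [DirectSum.decompose_of_mem_same ℳ hp] at h1
  let f : (𝒜 1) →ₗ[k] P :=
    { toFun := fun x => (x : A) • m
      map_add' := fun x y => by simp [add_smul]
      map_smul' := fun c x => by simp [smul_assoc] }
  have hrange : p ∈ LinearMap.range f := by
    simp only [hKdef] at hpK
    refine Submodule.span_le.mpr ?_ hpK
    rintro q ⟨a, ha, m0, hm0, rfl⟩
    rw [hpow t] at ha
    refine Submodule.mul_induction_on ha ?_ ?_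
    · intro x hx y hy
      have hym : y • m0 ∈ ℳ (t : ℤ) := by simpa using hsmul t 0 y m0 hy hm0
      obtain ⟨c, hc⟩ := Submodule.mem_span_singleton.mp (hspan hym)
      refine ⟨c • (⟨x, hx⟩ : 𝒜 1), ?_⟩
      show ((c • (⟨x, hx⟩ : 𝒜 1) : 𝒜 1) : A) • m = (x * y) • m0
      rw [SetLike.val_smul, smul_assoc, mul_smul, ← hc, hcomm]
    · intro r s hr hs
      rw [add_smul]; exact add_mem hr hs
  obtain ⟨x, hxf⟩ := hrange
  exact ⟨x, x.2, hxf.symm⟩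

/-- Let `A` be a connected `ℕ`-graded finitely presented `k`-algebra generated in
degree `1`, `g` a homogeneous normal element of degree `n`, and `P` a truncated
point module of length `d+1` over `A`. For `1 ≤ i ≤ d - n` and nonzero
`m_{i-1} ∈ P_{i-1}`, `m_i ∈ P_i`: `g·m_{i-1} = 0 ↔ g·m_i = 0`. -/
theorem stmt1 {k A : Type*} [Field k] [IsAlgClosed k] [CharZero k]
    [Ring A] [Algebra k A]
    (𝒜 : ℕ → Submodule k A) [GradedAlgebra 𝒜] (hA : IsConnGradedFP 𝒜)
    (n : ℕ) (g : A) (hg : g ∈ 𝒜 n)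
    (hnl : ∀ a : A, ∃ b : A, g * a = b * g) (hnr : ∀ a : A, ∃ b : A, a * g = g * b)
    (P : Type*) [AddCommGroup P] [Module k P] [Module A P] [IsScalarTower k A P]
    (ℳ : ℤ → Submodule k P) [DirectSum.Decomposition ℳ]
    (hsmul : ∀ (i : ℕ) (j : ℤ) (a : A) (p : P), a ∈ 𝒜 i → p ∈ ℳ j → a • p ∈ ℳ (i + j))
    (d : ℕ) (hd : 1 ≤ d)
    (hgen : Submodule.span A (ℳ 0 : Set P) = ⊤)
    (hdim : ∀ i : ℤ, 0 ≤ i → i ≤ (d : ℤ) → Module.finrank k (ℳ i) = 1)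
    (hvanish : ∀ i : ℤ, i < 0 ∨ (d : ℤ) < i → ℳ i = ⊥)
    (i : ℤ) (hi1 : 1 ≤ i) (hi2 : i ≤ (d : ℤ) - (n : ℤ))
    (m₀ : P) (hm₀ : m₀ ∈ ℳ (i - 1)) (hm₀ne : m₀ ≠ 0)
    (m₁ : P) (hm₁ : m₁ ∈ ℳ i) (hm₁ne : m₁ ≠ 0) :
    g • m₀ = 0 ↔ g • m₁ = 0 := by
  classical
  obtain ⟨hA0, -, hA3, -, -⟩ := hA
  have hcomm : ∀ (c : k) (a : A) (q : P), a • (c • q) = c • (a • q) := by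
    intro c a q
    rw [← algebraMap_smul A c q, ← mul_smul, ← Algebra.commutes, mul_smul, algebraMap_smul]
  -- any nonzero element of a degree in [0, d] spans that degree
  have hsp : ∀ (j : ℤ), 0 ≤ j → j ≤ (d : ℤ) → ∀ m ∈ ℳ j, m ≠ 0 →
      ℳ j ≤ Submodule.span k {m} := by
    intro j h0 h1 m hm hne q hq
    have hfr := hdim j h0 h1
    have hvne : (⟨m, hm⟩ : ℳ j) ≠ 0 := fun h => hne (by simpa using congrArg Subtype.val h)
    obtain ⟨c, hc⟩ := (finrank_eq_one_iff_of_nonzero' (⟨m, hm⟩ : ℳ j) hvne).mp hfr ⟨q, hq⟩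
    exact Submodule.mem_span_singleton.mpr ⟨c, by simpa using congrArg Subtype.val hc⟩
  constructor
  · -- forward
    intro h0
    set t : ℕ := (i - 1).toNat with htdef
    have ht : ((t : ℕ) : ℤ) = i - 1 := Int.toNat_of_nonneg (by omega)
    have hmem : m₀ ∈ ℳ (t : ℤ) := by rw [ht]; exact hm₀
    have hsp0 : ℳ (t : ℤ) ≤ Submodule.span k {m₀} := by
      rw [ht]; exact hsp (i - 1) (by omega) (by omega) m₀ hm₀ hm₀ne
    have hp : m₁ ∈ ℳ ((t : ℤ) + 1) := by
      have : (t : ℤ) + 1 = i := by omega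
      rw [this]; exact hm₁
    obtain ⟨x, hx, hxm⟩ := aux_key 𝒜 hA0 hA3 ℳ hsmul hgen t m₀ hmem hsp0 m₁ hp
    obtain ⟨b, hb⟩ := hnl x
    rw [hxm, ← mul_smul, hb, mul_smul, h0, smul_zero]
  · -- backward
    intro h1
    by_contra h0
    have hgm : g • m₀ ∈ ℳ ((n : ℤ) + (i - 1)) := hsmul n (i - 1) g m₀ hg hm₀
    set t : ℕ := ((n : ℤ) + (i - 1)).toNat with htdef
    have ht : ((t : ℕ) : ℤ) = (n : ℤ) + (i - 1) := Int.toNat_of_nonneg (by omega)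
    have hmem : g • m₀ ∈ ℳ (t : ℤ) := by rw [ht]; exact hgm
    have hsp0 : ℳ (t : ℤ) ≤ Submodule.span k {g • m₀} := by
      rw [ht]; exact hsp _ (by omega) (by omega) _ hgm h0
    -- a nonzero element in degree t + 1
    have hex : ∃ p ∈ ℳ ((t : ℤ) + 1), p ≠ 0 := by
      by_contra hcon
      push_neg at hcon
      have hbot : ℳ ((t : ℤ) + 1) = ⊥ := by
        rw [Submodule.eq_bot_iff]; exact hcon
      have hfr := hdim ((t : ℤ) + 1) (by omega) (by omega)
      rw [hbot] at hfr
      simp at hfr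
    obtain ⟨p, hp, hpne⟩ := hex
    obtain ⟨x, hx, hxp⟩ := aux_key 𝒜 hA0 hA3 ℳ hsmul hgen t (g • m₀) hmem hsp0 p hp
    obtain ⟨b, hb⟩ := hnr x
    -- homogenize b : x * g = g * b₁ with b₁ ∈ 𝒜 1
    have hxg : x * g ∈ 𝒜 (n + 1) := by
      have := SetLike.mul_mem_graded hx hg
      rwa [add_comm] at this
    have key : x * g = g * (DirectSum.decompose 𝒜 b 1 : A) := by
      have h2 := DirectSum.coe_decompose_mul_add_of_left_mem 𝒜 (j := 1) hg (b := b)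
      rw [← hb, DirectSum.decompose_of_mem_same 𝒜 hxg] at h2
      exact h2
    have hb1m : (DirectSum.decompose 𝒜 b 1 : A) • m₀ ∈ ℳ (((1 : ℕ) : ℤ) + (i - 1)) :=
      hsmul 1 (i - 1) _ m₀ (SetLike.coe_mem _) hm₀
    have hi' : ((1 : ℕ) : ℤ) + (i - 1) = i := by omega
    rw [hi'] at hb1m
    obtain ⟨c, hc⟩ := Submodule.mem_span_singleton.mp
      (hsp i (by omega) (by omega) m₁ hm₁ hm₁ne hb1m)
    apply hpne
    rw [hxp, ← mul_smul, key, mul_smul, ← hc, hcomm, h1, smul_zero]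
end

section
/- Let $k$ be an algebraically closed field of characteristic $0$, let $A$ be a connected $\mathbb{N}$-graded finitely presented $k$-algebra generated in degree $1$, let $g$ be a homogeneous normal element of $A$ of degree $n$, and let $P = \bigoplus_{j \geq 0} P_j$ be a point module over $A$. Then for every $j \geq 1$ and all nonzero $m_{j-1} \in P_{j-1}$ and nonzero $m_j \in P_j$: $g \cdot m_{j-1} = 0$ holds if and only if $g \cdot m_j = 0$ holds. -/
section Aux

variable {k A : Type*} [Field k] [Ring A] [Algebra k A]
variable (𝒜 : ℕ → Submodule k A) [GradedAlgebra 𝒜]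
variable {P : Type*} [AddCommGroup P] [Module k P] [Module A P] [IsScalarTower k A P]
variable (ℳ : ℤ → Submodule k P) [DirectSum.Decomposition ℳ]

/-- Projection onto the degree `m` component, as an additive monoid hom. -/
noncomputable def auxProj (m : ℤ) : P →+ P :=
  AddMonoidHom.mk' (fun p => (DirectSum.decompose ℳ p m : P)) (by
    intro x y
    simp [DirectSum.decompose_add, DirectSum.add_apply])

lemma auxProj_apply (m : ℤ) (p : P) : auxProj ℳ m p = (DirectSum.decompose ℳ p m : P) := rfl

lemma aux_smul_span {d e : ℕ} {a : A} (ha : a ∈ 𝒜 d) {x : P}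
    (hx : x ∈ Submodule.span k {x | ∃ b ∈ 𝒜 e, ∃ q ∈ ℳ 0, x = b • q}) :
    a • x ∈ Submodule.span k {x | ∃ b ∈ 𝒜 (d + e), ∃ q ∈ ℳ 0, x = b • q} := by
  induction hx using Submodule.span_induction with
  | mem x hxm =>
      obtain ⟨b, hb, q, hq, rfl⟩ := hxm
      exact Submodule.subset_span
        ⟨a * b, SetLike.mul_mem_graded ha hb, q, hq, (mul_smul a b q).symm⟩
  | zero => simp
  | add x y _ _ hx hy => rw [smul_add]; exact add_mem hx hy
  | smul c x _ hx =>
      have : a • (c • x) = c • (a • x) := (smul_comm c a x).symm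
      rw [this]; exact Submodule.smul_mem _ c hx

lemma aux_proj_mem
    (hsmul : ∀ (i : ℕ) (j : ℤ) (a : A) (p : P), a ∈ 𝒜 i → p ∈ ℳ j → a • p ∈ ℳ (i + j))
    (hgen : Submodule.span A (ℳ 0 : Set P) = ⊤)
    (hvanish : ∀ i : ℤ, i < 0 → ℳ i = ⊥)
    (p : P) (m : ℕ) :
    (DirectSum.decompose ℳ p (m : ℤ) : P) ∈
      Submodule.span k {x | ∃ b ∈ 𝒜 m, ∃ q ∈ ℳ 0, x = b • q} := by
  classical
  have hp : p ∈ Submodule.span A (ℳ 0 : Set P) := hgen ▸ Submodule.mem_top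
  induction hp using Submodule.span_induction generalizing m with
  | mem x hx =>
      rcases eq_or_ne m 0 with rfl | hm
      · rw [show ((0:ℕ):ℤ) = (0:ℤ) by norm_num, DirectSum.decompose_of_mem_same ℳ hx]
        exact Submodule.subset_span ⟨1, SetLike.GradedOne.one_mem, x, hx, (one_smul A x).symm⟩
      · rw [DirectSum.decompose_of_mem_ne ℳ hx (by exact_mod_cast hm.symm)]
        exact zero_mem _
  | zero => rw [DirectSum.decompose_zero]; simpa using zero_mem _
  | add x y _ _ ihx ihy =>
      rw [show (DirectSum.decompose ℳ (x + y) (m:ℤ) : P) = auxProj ℳ m (x+y) from rfl,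
        map_add]
      exact add_mem (ihx m) (ihy m)
  | smul a x hx ih =>
      -- decompose a and x into homogeneous pieces
      have hax : a • x = ∑ d ∈ (DirectSum.decompose 𝒜 a).support,
          ∑ e ∈ (DirectSum.decompose ℳ x).support,
            ((DirectSum.decompose 𝒜 a d : A)) • ((DirectSum.decompose ℳ x e : P)) := by
        conv_lhs => rw [← DirectSum.sum_support_decompose 𝒜 a,
          ← DirectSum.sum_support_decompose ℳ x]
        rw [Finset.sum_smul]
        exact Finset.sum_congr rfl fun d _ => Finset.smul_sum
      rw [show (DirectSum.decompose ℳ (a • x) (m:ℤ) : P) = auxProj ℳ m (a • x) from rfl,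
        hax, map_sum]
      refine Submodule.sum_mem _ fun d _ => ?_
      rw [map_sum]
      refine Submodule.sum_mem _ fun e he => ?_
      have hmem : (DirectSum.decompose 𝒜 a d : A) • (DirectSum.decompose ℳ x e : P)
          ∈ ℳ ((d : ℤ) + e) :=
        hsmul d e _ _ (SetLike.coe_mem _) (SetLike.coe_mem _)
      rcases eq_or_ne ((d : ℤ) + e) m with hde | hde
      · rw [auxProj_apply, DirectSum.decompose_of_mem_same ℳ (hde ▸ hmem)]
        -- e must be nonnegative
        have he0 : 0 ≤ e := by
          by_contra hneg
          have hb : ℳ e = ⊥ := hvanish e (by omega)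
          have h2 : ((DirectSum.decompose ℳ x e : P)) = 0 :=
            (Submodule.eq_bot_iff _).mp hb _ (SetLike.coe_mem _)
          exact DFinsupp.mem_support_iff.mp he (ZeroMemClass.coe_eq_zero.mp h2)
        obtain ⟨e', rfl⟩ := Int.eq_ofNat_of_zero_le he0
        have hd : d + e' = m := by omega
        have := aux_smul_span 𝒜 ℳ (d := d) (e := e')
          (SetLike.coe_mem (DirectSum.decompose 𝒜 a d)) (ih e')
        rwa [hd] at this
      · rw [auxProj_apply, DirectSum.decompose_of_mem_ne ℳ hmem hde]
        exact zero_mem _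

lemma aux_swap (h0 : 𝒜 0 = 1) (h1 : ∀ i : ℕ, 𝒜 (i + 1) = 𝒜 i * 𝒜 1) :
    ∀ i : ℕ, 𝒜 (i + 1) = 𝒜 1 * 𝒜 i := by
  intro i
  induction i with
  | zero => rw [h1 0, h0, one_mul, mul_one]
  | succ i ih =>
      calc 𝒜 (i + 2) = 𝒜 (i + 1) * 𝒜 1 := h1 (i + 1)
        _ = 𝒜 1 * 𝒜 i * 𝒜 1 := by rw [ih]
        _ = 𝒜 1 * (𝒜 i * 𝒜 1) := mul_assoc _ _ _
        _ = 𝒜 1 * 𝒜 (i + 1) := by rw [h1 i]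

lemma aux_step (h0 : 𝒜 0 = 1) (h1 : ∀ i : ℕ, 𝒜 (i + 1) = 𝒜 i * 𝒜 1)
    (hsmul : ∀ (i : ℕ) (j : ℤ) (a : A) (p : P), a ∈ 𝒜 i → p ∈ ℳ j → a • p ∈ ℳ (i + j))
    (hgen : Submodule.span A (ℳ 0 : Set P) = ⊤)
    (hvanish : ∀ i : ℤ, i < 0 → ℳ i = ⊥)
    (i : ℕ) {p : P} (hp : p ∈ ℳ ((i : ℤ) + 1)) :
    p ∈ Submodule.span k {x | ∃ a ∈ 𝒜 1, ∃ q ∈ ℳ (i : ℤ), x = a • q} := by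
  have h := aux_proj_mem 𝒜 ℳ hsmul hgen hvanish p (i + 1)
  rw [show (((i+1:ℕ)):ℤ) = (i:ℤ) + 1 by push_cast; ring,
    DirectSum.decompose_of_mem_same ℳ hp] at h
  refine Submodule.span_le.mpr ?_ h
  rintro x ⟨b, hb, q, hq, rfl⟩
  rw [aux_swap 𝒜 h0 h1 i] at hb
  refine Submodule.mul_induction_on
    (C := fun z => z • q ∈ Submodule.span k {x | ∃ a ∈ 𝒜 1, ∃ q ∈ ℳ (i : ℤ), x = a • q})
    hb ?_ ?_
  · intro x hx y hy
    rw [mul_smul]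
    have hyq : y • q ∈ ℳ (i : ℤ) := by simpa using hsmul i 0 y q hy hq
    exact Submodule.subset_span ⟨x, hx, y • q, hyq, rfl⟩
  · intro x y hx hy
    rw [add_smul]; exact add_mem hx hy

end Aux

/-- Let `A` be a connected ℕ-graded finitely presented `k`-algebra generated in
degree 1, `g` a homogeneous normal element of degree `n`, and `P` a point module
over `A`. For `j ≥ 1` and nonzero `m_{j-1} ∈ P_{j-1}`, `m_j ∈ P_j`:
`g·m_{j-1} = 0 ↔ g·m_j = 0`. -/
theorem stmt2 {k A : Type*} [Field k] [IsAlgClosed k] [CharZero k]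
    [Ring A] [Algebra k A]
    (𝒜 : ℕ → Submodule k A) [GradedAlgebra 𝒜] (hA : IsConnGradedFP 𝒜)
    (n : ℕ) (g : A) (hg : g ∈ 𝒜 n)
    (hnl : ∀ a : A, ∃ b : A, g * a = b * g) (hnr : ∀ a : A, ∃ b : A, a * g = g * b)
    (P : Type*) [AddCommGroup P] [Module k P] [Module A P] [IsScalarTower k A P]
    (ℳ : ℤ → Submodule k P) [DirectSum.Decomposition ℳ]
    (hsmul : ∀ (i : ℕ) (j : ℤ) (a : A) (p : P), a ∈ 𝒜 i → p ∈ ℳ j → a • p ∈ ℳ (i + j))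
    (hgen : Submodule.span A (ℳ 0 : Set P) = ⊤)
    (hdim : ∀ i : ℤ, 0 ≤ i → Module.finrank k (ℳ i) = 1)
    (hvanish : ∀ i : ℤ, i < 0 → ℳ i = ⊥)
    (j : ℤ) (hj : 1 ≤ j)
    (m₀ : P) (hm₀ : m₀ ∈ ℳ (j - 1)) (hm₀ne : m₀ ≠ 0)
    (m₁ : P) (hm₁ : m₁ ∈ ℳ j) (hm₁ne : m₁ ≠ 0) :
    g • m₀ = 0 ↔ g • m₁ = 0 := by
  classical
  obtain ⟨h0, -, h1, -⟩ := hA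
  -- a nonzero vector in a 1-dimensional graded piece spans it
  have fact1 : ∀ (d : ℤ), 0 ≤ d → ∀ v w : P, v ∈ ℳ d → w ∈ ℳ d → v ≠ 0 →
      ∃ c : k, w = c • v := by
    intro d hd v w hv hw hvne
    have hrk := hdim d hd
    have hne : (⟨v, hv⟩ : ℳ d) ≠ 0 := fun h => hvne (by simpa using congrArg Subtype.val h)
    obtain ⟨c, hc⟩ := (finrank_eq_one_iff_of_nonzero' (⟨v, hv⟩ : ℳ d) hne).mp hrk ⟨w, hw⟩
    exact ⟨c, by simpa using (congrArg Subtype.val hc).symm⟩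
  lift j to ℕ using le_trans zero_le_one hj
  have hj1 : 1 ≤ j := by exact_mod_cast hj
  obtain ⟨i, rfl⟩ : ∃ i : ℕ, j = i + 1 := ⟨j - 1, by omega⟩
  have hm₀' : m₀ ∈ ℳ (i : ℤ) := by
    rwa [show ((((i:ℕ)+1:ℕ)):ℤ) - 1 = (i:ℤ) by push_cast; ring] at hm₀
  have hm₁' : m₁ ∈ ℳ ((i : ℤ) + 1) := by
    rwa [show ((((i:ℕ)+1:ℕ)):ℤ) = (i:ℤ) + 1 by push_cast; ring] at hm₁
  constructor
  · -- forward: g • m₀ = 0 → g • m₁ = 0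
    intro hz
    have hspan := aux_step 𝒜 ℳ h0 h1 hsmul hgen hvanish i hm₁'
    -- the k-linear map x ↦ g • x
    let lg : P →ₗ[k] P :=
      { toFun := fun x => g • x
        map_add' := fun x y => smul_add g x y
        map_smul' := fun c x => (smul_comm c g x).symm }
    have hker : Submodule.span k {x | ∃ a ∈ 𝒜 1, ∃ q ∈ ℳ (i : ℤ), x = a • q} ≤
        LinearMap.ker lg := by
      rw [Submodule.span_le]
      rintro x ⟨a, ha, q, hq, rfl⟩
      obtain ⟨c, rfl⟩ := fact1 (i : ℤ) (by positivity) m₀ q hm₀' hq hm₀ne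
      obtain ⟨b, hb⟩ := hnl a
      have : lg (a • c • m₀) = 0 := by
        show g • (a • c • m₀) = 0
        rw [← smul_comm c a m₀, ← smul_comm c g (a • m₀), smul_smul g a m₀, hb,
          mul_smul, hz, smul_zero, smul_zero]
      simpa [LinearMap.mem_ker] using this
    exact hker hspan
  · -- backward: g • m₁ = 0 → g • m₀ = 0
    intro hz
    by_contra hne
    set w := g • m₀ with hw
    have hwmem : w ∈ ℳ ((n : ℤ) + i) := hsmul n (i : ℤ) g m₀ hg hm₀'
    -- pick a nonzero element of ℳ (n + i + 1)
    have hnb : ℳ ((n : ℤ) + i + 1) ≠ ⊥ := by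
      intro hbot
      have := hdim ((n : ℤ) + i + 1) (by positivity)
      rw [hbot] at this
      rw [finrank_bot] at this; omega
    obtain ⟨u, hu, hune⟩ := Submodule.exists_mem_ne_zero_of_ne_bot hnb
    have hu' : u ∈ ℳ (((n + i : ℕ) : ℤ) + 1) := by
      rwa [show (((n + i : ℕ)) : ℤ) + 1 = (n : ℤ) + i + 1 by push_cast; ring]
    have hspan := aux_step 𝒜 ℳ h0 h1 hsmul hgen hvanish (n + i) hu'
    -- there is a ∈ 𝒜 1 with a • w ≠ 0
    have hex : ∃ a ∈ 𝒜 1, a • w ≠ 0 := by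
      by_contra hall
      push_neg at hall
      have : Submodule.span k {x | ∃ a ∈ 𝒜 1, ∃ q ∈ ℳ ((n + i : ℕ) : ℤ), x = a • q} ≤ ⊥ := by
        rw [Submodule.span_le]
        rintro x ⟨a, ha, q, hq, rfl⟩
        have hqw : q ∈ ℳ ((n : ℤ) + i) := by
          rwa [show (((n + i : ℕ)) : ℤ) = (n : ℤ) + i by push_cast; ring] at hq
        obtain ⟨c, rfl⟩ := fact1 ((n : ℤ) + i) (by positivity) w q hwmem hqw hne
        have : a • (c • w) = c • (a • w) := (smul_comm c a w).symm
        rw [SetLike.mem_coe, Submodule.mem_bot, this, hall a ha, smul_zero]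
      exact hune (by simpa using this hspan)
    obtain ⟨a, ha1, haw⟩ := hex
    obtain ⟨b, hab⟩ := hnr a
    set b₁ : A := (DirectSum.decompose 𝒜 b 1 : A) with hb₁
    have hb₁mem : b₁ ∈ 𝒜 1 := SetLike.coe_mem _
    have hgb : g * b₁ = a * g := by
      have hag : a * g ∈ 𝒜 (1 + n) := SetLike.mul_mem_graded ha1 hg
      have hd : (DirectSum.decompose 𝒜 (g * b) (1 + n) : A) = a * g := by
        rw [← hab]; exact DirectSum.decompose_of_mem_same 𝒜 hag
      rw [DirectSum.coe_decompose_mul_of_left_mem_of_le (𝒜 := 𝒜) hg (by omega : n ≤ 1 + n),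
        show 1 + n - n = 1 by omega] at hd
      exact hd
    have key : a • w = g • (b₁ • m₀) := by
      rw [hw, smul_smul, smul_smul, hgb]
    have hb₁m : b₁ • m₀ ∈ ℳ ((i : ℤ) + 1) := by
      have := hsmul 1 (i : ℤ) b₁ m₀ hb₁mem hm₀'
      rwa [show ((1 : ℕ) : ℤ) + i = (i : ℤ) + 1 by push_cast; ring] at this
    obtain ⟨c, hc⟩ := fact1 ((i : ℤ) + 1) (by positivity) m₁ (b₁ • m₀) hm₁' hb₁m hm₁ne
    rw [hc, ← smul_comm c g m₁, hz, smul_zero] at key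
    exact haw key
end

section
/- Let $k$ be an algebraically closed field of characteristic $0$, let $A$ be a connected $\mathbb{N}$-graded finitely presented $k$-algebra generated in degree $1$, let $g$ be a homogeneous normal element of $A$ of degree $n$, let $d \geq n$, and let $P$ be a truncated point module of length $d+1$ over $A$. If $P$ is not a truncated $g$-torsionfree point module of length $d+1$ (i.e. there exists a nonzero $a \in \bigoplus_{i=0}^{d-n} P_i$ with $ga = 0$), then $gP = 0$. -/
private lemma rank1_span {k V : Type*} [Field k] [AddCommGroup V] [Module k V]
    (M : Submodule k V) (h : Module.finrank k M = 1) {v : V} (hv : v ∈ M) (hv0 : v ≠ 0) :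
    ∀ w ∈ M, ∃ c : k, w = c • v := by
  intro w hw
  obtain ⟨c, hc⟩ := (finrank_eq_one_iff_of_nonzero' (⟨v, hv⟩ : M)
    (by simpa [Subtype.ext_iff] using hv0)).mp h ⟨w, hw⟩
  exact ⟨c, by simpa [Subtype.ext_iff] using hc.symm⟩

private lemma rank1_exists_ne_zero {k V : Type*} [Field k] [AddCommGroup V] [Module k V]
    (M : Submodule k V) (h : Module.finrank k M = 1) : ∃ v ∈ M, v ≠ 0 := by
  by_contra hc
  push_neg at hc
  have hbot : M = ⊥ := by
    rw [eq_bot_iff]; intro x hx; simpa using hc x hx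
  rw [hbot] at h
  simp [finrank_bot] at h

private lemma grade_add {k A : Type*} [Field k] [Ring A] [Algebra k A]
    (𝒜 : ℕ → Submodule k A) (h0 : 𝒜 0 = 1) (h1 : ∀ i, 𝒜 (i + 1) = 𝒜 i * 𝒜 1) :
    ∀ m j : ℕ, 𝒜 (m + j) = 𝒜 m * 𝒜 j := by
  intro m j
  induction j with
  | zero => rw [Nat.add_zero, h0, Submodule.mul_one]
  | succ j ih => rw [← Nat.add_assoc, h1, ih, mul_assoc, ← h1]

/-- Let `A` be a connected ℕ-graded finitely presented `k`-algebra generated in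
degree 1, `g` a homogeneous normal element of degree `n`, `d ≥ n`, and `P` a
truncated point module of length `d+1` over `A`. If `P` is not truncated
`g`-torsionfree (some nonzero `a ∈ ⊕_{i=0}^{d-n} P_i` has `g·a = 0`), then `gP = 0`. -/
theorem stmt3 {k A : Type*} [Field k] [IsAlgClosed k] [CharZero k]
    [Ring A] [Algebra k A]
    (𝒜 : ℕ → Submodule k A) [GradedAlgebra 𝒜] (hA : IsConnGradedFP 𝒜)
    (n : ℕ) (g : A) (hg : g ∈ 𝒜 n)
    (hnl : ∀ a : A, ∃ b : A, g * a = b * g) (hnr : ∀ a : A, ∃ b : A, a * g = g * b)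
    (P : Type*) [AddCommGroup P] [Module k P] [Module A P] [IsScalarTower k A P]
    (ℳ : ℤ → Submodule k P) [DirectSum.Decomposition ℳ]
    (hsmul : ∀ (i : ℕ) (j : ℤ) (a : A) (p : P), a ∈ 𝒜 i → p ∈ ℳ j → a • p ∈ ℳ (i + j))
    (d : ℕ) (hd : 1 ≤ d) (hdn : n ≤ d)
    (hgen : Submodule.span A (ℳ 0 : Set P) = ⊤)
    (hdim : ∀ i : ℤ, 0 ≤ i → i ≤ (d : ℤ) → Module.finrank k (ℳ i) = 1)
    (hvanish : ∀ i : ℤ, i < 0 ∨ (d : ℤ) < i → ℳ i = ⊥)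
    (htor : ∃ a : P, a ∈ (⨆ i ∈ Set.Icc (0 : ℤ) ((d : ℤ) - (n : ℤ)), ℳ i) ∧
      a ≠ 0 ∧ g • a = 0) :
    ∀ p : P, g • p = 0 := by
  classical
  obtain ⟨h0, -, h1, -, -⟩ := hA
  -- the degree-`j` projection, as a `k`-linear map `P →ₗ[k] P`
  set π : ℤ → (P →ₗ[k] P) := fun j =>
    (ℳ j).subtype ∘ₗ (DirectSum.component k ℤ (fun i => ↥(ℳ i)) j) ∘ₗ
      (DirectSum.decomposeLinearEquiv ℳ).toLinearMap with hπ_def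
  have hπ_apply : ∀ (j : ℤ) (p : P), π j p = (DirectSum.decompose ℳ p j : P) := fun _ _ => rfl
  have hπ_same : ∀ (j : ℤ) (p : P), p ∈ ℳ j → π j p = p := by
    intro j p hp; rw [hπ_apply, DirectSum.decompose_of_mem_same ℳ hp]
  have hπ_ne : ∀ (i j : ℤ) (p : P), p ∈ ℳ i → i ≠ j → π j p = 0 := by
    intro i j p hp hij; rw [hπ_apply, DirectSum.decompose_of_mem_ne ℳ hp hij]
  -- a generator of `ℳ 0`
  have hM0 : Module.finrank k (ℳ 0) = 1 := hdim 0 le_rfl (by exact_mod_cast Nat.zero_le d)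
  obtain ⟨p0, hp0M, hp0⟩ := rank1_exists_ne_zero (ℳ 0) hM0
  -- `P` is cyclic generated by `p0`
  have hcyc : ∀ p : P, ∃ a : A, p = a • p0 := by
    intro p
    have hspan : Submodule.span A ({p0} : Set P) = ⊤ := by
      rw [eq_top_iff, ← hgen, Submodule.span_le]
      intro w hw
      obtain ⟨c, rfl⟩ := rank1_span (ℳ 0) hM0 hp0M hp0 w hw
      rw [← algebraMap_smul A c p0]
      exact Submodule.smul_mem _ _ (Submodule.mem_span_singleton_self p0)
    obtain ⟨a, ha⟩ := Submodule.mem_span_singleton.mp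
      (hspan ▸ Submodule.mem_top : p ∈ Submodule.span A ({p0} : Set P))
    exact ⟨a, ha.symm⟩
  -- a homogeneous element of `P` of degree `j` comes from `𝒜 j`
  have hdeg : ∀ (j : ℕ) (p : P), p ∈ ℳ (j : ℤ) → ∃ a ∈ 𝒜 j, p = a • p0 := by
    intro j p hp
    obtain ⟨a, rfl⟩ := hcyc p
    have hsum : ∑ i ∈ (DirectSum.decompose 𝒜 a).support,
        ((DirectSum.decompose 𝒜 a i : A)) • p0 = a • p0 := by
      rw [← Finset.sum_smul, DirectSum.sum_support_decompose]
    have h2 : π (j : ℤ) (a • p0) = (DirectSum.decompose 𝒜 a j : A) • p0 := by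
      rw [← hsum, map_sum, Finset.sum_eq_single j]
      · exact hπ_same _ _ (by simpa using hsmul j 0 _ p0 (SetLike.coe_mem _) hp0M)
      · intro i _ hij
        exact hπ_ne (i : ℤ) (j : ℤ) _ (by simpa using hsmul i 0 _ p0 (SetLike.coe_mem _) hp0M)
          (by exact_mod_cast hij)
      · intro hj
        rw [DFinsupp.notMem_support_iff.mp hj]
        simp
    rw [hπ_same _ _ hp] at h2
    exact ⟨_, SetLike.coe_mem _, h2⟩
  -- extract a homogeneous torsion element
  obtain ⟨a, haSup, ha0, hga⟩ := htor
  have hcomp0 : ∀ j : ℤ, j ∉ Set.Icc (0 : ℤ) ((d : ℤ) - (n : ℤ)) → π j a = 0 := by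
    intro j hj
    have hle : (⨆ i ∈ Set.Icc (0 : ℤ) ((d : ℤ) - (n : ℤ)), ℳ i) ≤ LinearMap.ker (π j) := by
      refine iSup₂_le fun i hi => ?_
      intro p hp
      exact LinearMap.mem_ker.mpr (hπ_ne i j p hp (fun h => hj (h ▸ hi)))
    exact LinearMap.mem_ker.mp (hle haSup)
  have hexj : ∃ j : ℤ, (DirectSum.decompose ℳ a j : P) ≠ 0 := by
    by_contra hall
    push_neg at hall
    apply ha0
    rw [← DirectSum.sum_support_decompose ℳ a]
    exact Finset.sum_eq_zero fun i _ => hall i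
  obtain ⟨j, haj⟩ := hexj
  set aj : P := (DirectSum.decompose ℳ a j : P) with haj_def
  have hajM : aj ∈ ℳ j := SetLike.coe_mem _
  have hjIcc : j ∈ Set.Icc (0 : ℤ) ((d : ℤ) - (n : ℤ)) := by
    by_contra hj
    exact haj (by rw [haj_def, ← hπ_apply]; exact hcomp0 j hj)
  have hjIcc' : 0 ≤ j ∧ j ≤ (d : ℤ) - (n : ℤ) := Set.mem_Icc.mp hjIcc
  -- `g` kills the component `aj`
  have hgaj : g • aj = 0 := by
    have hsum : ∑ i ∈ (DirectSum.decompose ℳ a).support,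
        g • (DirectSum.decompose ℳ a i : P) = g • a := by
      rw [← Finset.smul_sum, DirectSum.sum_support_decompose]
    have h2 : π ((n : ℤ) + j) (g • a) = g • aj := by
      rw [← hsum, map_sum, Finset.sum_eq_single j]
      · exact hπ_same _ _ (hsmul n j g _ hg (SetLike.coe_mem _))
      · intro i _ hij
        exact hπ_ne ((n : ℤ) + i) ((n : ℤ) + j) _ (hsmul n i g _ hg (SetLike.coe_mem _))
          (by omega)
      · intro hj'
        rw [DFinsupp.notMem_support_iff.mp hj']
        simp
    rw [hga, map_zero] at h2
    exact h2.symm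
  -- `g` kills all of `ℳ j`
  have hMj1 : Module.finrank k (ℳ j) = 1 := hdim j hjIcc'.1 (by omega)
  have hgMj : ∀ w ∈ ℳ j, g • w = 0 := by
    intro w hw
    obtain ⟨c, rfl⟩ := rank1_span (ℳ j) hMj1 hajM haj w hw
    rw [smul_comm, hgaj, smul_zero]
  -- main case split
  by_cases hgp0 : g • p0 = 0
  · intro p
    obtain ⟨a', rfl⟩ := hcyc p
    obtain ⟨b, hb⟩ := hnl a'
    rw [← mul_smul, hb, mul_smul, hgp0, smul_zero]
  · exfalso
    have hgp0M : g • p0 ∈ ℳ (n : ℤ) := by simpa using hsmul n 0 g p0 hg hp0M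
    have hMn1 : Module.finrank k (ℳ (n : ℤ)) = 1 :=
      hdim n (by positivity) (by exact_mod_cast hdn)
    set m : ℕ := j.toNat with hm_def
    have hmj : (m : ℤ) = j := Int.toNat_of_nonneg hjIcc'.1
    have hmnd : m + n ≤ d := by omega
    -- a nonzero element of degree `m + n`
    have hMmn1 : Module.finrank k (ℳ ((m + n : ℕ) : ℤ)) = 1 :=
      hdim _ (by positivity) (by exact_mod_cast hmnd)
    obtain ⟨q, hqM, hq0⟩ := rank1_exists_ne_zero _ hMmn1
    obtain ⟨c, hc, hqc⟩ := hdeg (m + n) q hqM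
    rw [grade_add 𝒜 h0 h1 m n] at hc
    -- `q = x • (g • p0)` for some `x ∈ 𝒜 m`
    set G : A →ₗ[k] P := (LinearMap.toSpanSingleton A P (g • p0)).restrictScalars k with hG_def
    set F : A →ₗ[k] P := (LinearMap.toSpanSingleton A P p0).restrictScalars k with hF_def
    have hmul_le : 𝒜 m * 𝒜 n ≤ Submodule.comap F (Submodule.map G (𝒜 m)) := by
      rw [Submodule.mul_le]
      intro x hx y hy
      have hyM : y • p0 ∈ ℳ (n : ℤ) := by simpa using hsmul n 0 y p0 hy hp0M
      obtain ⟨c', hc'⟩ := rank1_span (ℳ (n : ℤ)) hMn1 hgp0M hgp0 _ hyM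
      refine Submodule.mem_comap.mpr ⟨c' • x, Submodule.smul_mem _ _ hx, ?_⟩
      show (c' • x) • (g • p0) = (x * y) • p0
      rw [mul_smul, hc', smul_assoc, smul_comm]
    obtain ⟨x, hx, hxq⟩ := Submodule.mem_comap.mp (hmul_le hc)
    have hq_eq : q = x • (g • p0) := by
      rw [hqc]
      exact hxq.symm
    -- use normality to move `g` to the left
    obtain ⟨b, hb⟩ := hnr x
    have hq_eq2 : q = g • (b • p0) := by
      rw [hq_eq, ← mul_smul, hb, mul_smul]
    -- project `b • p0` to degree `m`
    have hsum : ∑ i ∈ (DirectSum.decompose 𝒜 b).support,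
        g • ((DirectSum.decompose 𝒜 b i : A)) • p0 = g • (b • p0) := by
      rw [← Finset.smul_sum, ← Finset.sum_smul, DirectSum.sum_support_decompose]
    have h2 : π ((m + n : ℕ) : ℤ) (g • (b • p0)) =
        g • ((DirectSum.decompose 𝒜 b m : A)) • p0 := by
      rw [← hsum, map_sum, Finset.sum_eq_single m]
      · refine hπ_same _ _ ?_
        have := hsmul n (m : ℤ) g ((DirectSum.decompose 𝒜 b m : A) • p0) hg
          (by simpa using hsmul m 0 _ p0 (SetLike.coe_mem _) hp0M)
        convert this using 2
        omega
      · intro i _ him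
        refine hπ_ne ((n : ℤ) + i) _ _ (hsmul n i g _ hg
          (by simpa using hsmul i 0 _ p0 (SetLike.coe_mem _) hp0M)) (by omega)
      · intro hm'
        rw [DFinsupp.notMem_support_iff.mp hm']
        simp
    rw [← hq_eq2, hπ_same _ _ hqM] at h2
    -- but `g` kills degree `m = j`, contradiction
    apply hq0
    rw [h2]
    exact hgMj _ (by rw [← hmj] at hajM ⊢; simpa using hsmul m 0 _ p0 (SetLike.coe_mem _) hp0M)
end

section
/- Let $k$ be an algebraically closed field of characteristic $0$, let $A$ be a connected $\mathbb{N}$-graded finitely presented $k$-algebra generated in degree $1$, let $g$ be a homogeneous normal element of $A$ of degree $n$, and let $P$ be a point module over $A$. If $P$ is not $g$-torsionfree (i.e. there exists a nonzero $m \in P$ with $gm = 0$), then $gP = 0$. -/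
theorem aux_stmt4 {k A : Type*} [Field k] [IsAlgClosed k] [CharZero k]
    [Ring A] [Algebra k A]
    (𝒜 : ℕ → Submodule k A) [GradedAlgebra 𝒜]
    (hA0 : 𝒜 0 = 1) (hAmul : ∀ i : ℕ, 𝒜 (i + 1) = 𝒜 i * 𝒜 1)
    (n : ℕ) (g : A) (hg : g ∈ 𝒜 n)
    (hnl : ∀ a : A, ∃ b : A, g * a = b * g) (hnr : ∀ a : A, ∃ b : A, a * g = g * b)
    (P : Type*) [AddCommGroup P] [Module k P] [Module A P] [IsScalarTower k A P]
    (ℳ : ℤ → Submodule k P) [DirectSum.Decomposition ℳ]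
    (hsmul : ∀ (i : ℕ) (j : ℤ) (a : A) (p : P), a ∈ 𝒜 i → p ∈ ℳ j → a • p ∈ ℳ (i + j))
    (hgen : Submodule.span A (ℳ 0 : Set P) = ⊤)
    (hdim : ∀ i : ℤ, 0 ≤ i → Module.finrank k (ℳ i) = 1)
    (hvanish : ∀ i : ℤ, i < 0 → ℳ i = ⊥)
    (htor : ∃ m : P, m ≠ 0 ∧ g • m = 0) :
    ∀ p : P, g • p = 0 := by
  classical
  -- degree projections
  let πM : ℤ → P →ₗ[k] P := fun t => (ℳ t).subtype ∘ₗ (DirectSum.component k ℤ (fun i => ↥(ℳ i)) t) ∘ₗ (DirectSum.decomposeLinearEquiv ℳ).toLinearMap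
  let πA : ℕ → A →ₗ[k] A := fun t => (𝒜 t).subtype ∘ₗ (DirectSum.component k ℕ (fun i => ↥(𝒜 i)) t) ∘ₗ (DirectSum.decomposeLinearEquiv 𝒜).toLinearMap
  have πM_same : ∀ (t : ℤ) (x : P), x ∈ ℳ t → πM t x = x :=
    fun t x hx => DirectSum.decompose_of_mem_same ℳ hx
  have πM_ne : ∀ (s t : ℤ) (x : P), x ∈ ℳ s → s ≠ t → πM t x = 0 :=
    fun s t x hx h => DirectSum.decompose_of_mem_ne ℳ hx h
  have πA_same : ∀ (t : ℕ) (x : A), x ∈ 𝒜 t → πA t x = x :=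
    fun t x hx => DirectSum.decompose_of_mem_same 𝒜 hx
  have πA_ne : ∀ (s t : ℕ) (x : A), x ∈ 𝒜 s → s ≠ t → πA t x = 0 :=
    fun s t x hx h => DirectSum.decompose_of_mem_ne 𝒜 hx h
  -- scalar commutation
  have hsc : ∀ (c : k) (a : A) (x : P), a • (c • x) = c • (a • x) := by
    intro c a x
    rw [← algebraMap_smul A c x, ← mul_smul, ← Algebra.commutes, mul_smul, algebraMap_smul]
  -- conjugation by degree-1 elements
  have hconj : ∀ b ∈ 𝒜 1, ∃ c, c ∈ 𝒜 1 ∧ b * g = g * c := by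
    intro b hb
    obtain ⟨b'', hb''⟩ := hnr b
    refine ⟨(DirectSum.decompose 𝒜 b'' 1 : A), SetLike.coe_mem _, ?_⟩
    have hbg : b * g ∈ 𝒜 (1 + n) := SetLike.mul_mem_graded hb hg
    have e2 : g * b'' = ∑ d ∈ (DirectSum.decompose 𝒜 b'').support, g * (DirectSum.decompose 𝒜 b'' d : A) := by
      conv_lhs => rw [← DirectSum.sum_support_decompose 𝒜 b'']
      rw [Finset.mul_sum]
    have e3 : πA (1+n) (g * b'') = g * (DirectSum.decompose 𝒜 b'' 1 : A) := by
      rw [e2, map_sum, Finset.sum_eq_single 1]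
      · exact πA_same _ _ (by simpa [add_comm] using SetLike.mul_mem_graded hg (SetLike.coe_mem (DirectSum.decompose 𝒜 b'' 1)))
      · intro d _ hd1
        exact πA_ne (n + d) _ _ (SetLike.mul_mem_graded hg (SetLike.coe_mem _)) (by omega)
      · intro h1
        rw [DFinsupp.notMem_support_iff.mp h1]
        simp
    calc b * g = πA (1+n) (b*g) := (πA_same _ _ hbg).symm
      _ = πA (1+n) (g * b'') := by rw [hb'']
      _ = _ := e3
  -- spanning in 1-dimensional pieces
  have hspan1 : ∀ (t : ℤ), 0 ≤ t → ∀ v ∈ ℳ t, v ≠ 0 → ∀ x ∈ ℳ t, ∃ c : k, x = c • v := by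
    intro t ht v hv hv0 x hx
    have h1 : Module.finrank k (ℳ t) = 1 := hdim t ht
    have hvne : (⟨v, hv⟩ : ℳ t) ≠ 0 := fun h => hv0 (congrArg Subtype.val h)
    have htop : Submodule.span k {(⟨v, hv⟩ : ℳ t)} = ⊤ :=
      (finrank_eq_one_iff_of_nonzero (⟨v, hv⟩ : ℳ t) hvne).mp h1
    have hx' : (⟨x, hx⟩ : ℳ t) ∈ Submodule.span k {(⟨v, hv⟩ : ℳ t)} := by
      rw [htop]; trivial
    obtain ⟨c, hc⟩ := Submodule.mem_span_singleton.mp hx'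
    exact ⟨c, by have := congrArg Subtype.val hc; simpa using this.symm⟩
  -- existence of a killed degree
  have hK : ∃ j : ℕ, ∀ q ∈ ℳ (j : ℤ), g • q = 0 := by
    obtain ⟨m, hm0, hgm⟩ := htor
    have hEe : ∃ e : ℤ, (DirectSum.decompose ℳ m e : P) ≠ 0 := by
      by_contra h; push_neg at h
      apply hm0
      conv_lhs => rw [← DirectSum.sum_support_decompose ℳ m]
      exact Finset.sum_eq_zero fun e _ => h e
    obtain ⟨e, he⟩ := hEe
    have he0 : 0 ≤ e := by
      by_contra hneg; push_neg at hneg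
      have hco : (DirectSum.decompose ℳ m e : P) ∈ (⊥ : Submodule k P) :=
        (hvanish e hneg).le (SetLike.coe_mem _)
      exact he (by simpa using hco)
    have hesupp : e ∈ (DirectSum.decompose ℳ m).support := by
      rw [DFinsupp.mem_support_iff]
      exact fun h => he (by rw [h]; rfl)
    have hsum : g • m = ∑ e' ∈ (DirectSum.decompose ℳ m).support, g • (DirectSum.decompose ℳ m e' : P) := by
      conv_lhs => rw [← DirectSum.sum_support_decompose ℳ m]
      rw [Finset.smul_sum]
    have h4 : πM ((n:ℤ)+e) (g • m) = g • (DirectSum.decompose ℳ m e : P) := by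
      rw [hsum, map_sum, Finset.sum_eq_single_of_mem e hesupp]
      · exact πM_same _ _ (hsmul n e g _ hg (SetLike.coe_mem _))
      · intro e' _ hne
        exact πM_ne ((n:ℤ)+e') _ _ (hsmul n e' g _ hg (SetLike.coe_mem _)) (by omega)
    rw [hgm, map_zero] at h4
    refine ⟨e.toNat, fun q hq => ?_⟩
    rw [Int.toNat_of_nonneg he0] at hq
    obtain ⟨c, hc⟩ := hspan1 e he0 ((DirectSum.decompose ℳ m e : P)) (SetLike.coe_mem _) he q hq
    rw [hc, hsc, ← h4, smul_zero]
  -- the span of A_1 • ℳ i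
  let W : ℤ → Submodule k P := fun i => Submodule.span k {x | ∃ b ∈ 𝒜 1, ∃ q ∈ ℳ i, b • q = x}
  have hS : ∀ (d : ℕ) (e : ℤ), 0 ≤ e → ∀ a ∈ 𝒜 (d+1), ∀ q ∈ ℳ e, a • q ∈ W ((d:ℤ) + e) := by
    intro d
    induction d with
    | zero =>
      intro e he a ha q hq
      have h0 : ((0:ℕ):ℤ) + e = e := by push_cast; ring
      rw [h0]
      exact Submodule.subset_span ⟨a, ha, q, hq, rfl⟩
    | succ d ih =>
      intro e he a ha q hq
      rw [hAmul (d+1)] at ha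
      have harith : ((d+1:ℕ):ℤ) + e = (d:ℤ) + (1 + e) := by push_cast; ring
      rw [harith]
      refine Submodule.mul_induction_on ha (fun x hx y hy => ?_) (fun x y cx cy => ?_)
      · rw [mul_smul]
        have hyq : y • q ∈ ℳ (1 + e) := by simpa using hsmul 1 e y q hy hq
        exact ih (1+e) (by omega) x hx _ hyq
      · rw [add_smul]; exact add_mem cx cy
  -- main spanning claim
  have hC : ∀ p : P, ∀ i : ℕ, πM ((i:ℤ)+1) p ∈ W i := by
    intro p
    have hp : p ∈ Submodule.span A (ℳ 0 : Set P) := by rw [hgen]; trivial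
    induction hp using Submodule.span_induction with
    | mem q hq =>
      intro i
      rw [πM_ne 0 _ q hq (by omega)]
      exact zero_mem _
    | zero => intro i; rw [map_zero]; exact zero_mem _
    | add x y hx hy ihx ihy => intro i; rw [map_add]; exact add_mem (ihx i) (ihy i)
    | smul a x hx ihx =>
      intro i
      have hax : a • x = ∑ d ∈ (DirectSum.decompose 𝒜 a).support, (DirectSum.decompose 𝒜 a d : A) • x := by
        conv_lhs => rw [← DirectSum.sum_support_decompose 𝒜 a]
        rw [Finset.sum_smul]
      rw [hax, map_sum]
      apply Submodule.sum_mem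
      intro d _
      have had : (DirectSum.decompose 𝒜 a d : A) ∈ 𝒜 d := SetLike.coe_mem _
      have hx2 : (DirectSum.decompose 𝒜 a d : A) • x = ∑ e ∈ (DirectSum.decompose ℳ x).support, (DirectSum.decompose 𝒜 a d : A) • (DirectSum.decompose ℳ x e : P) := by
        conv_lhs => rw [← DirectSum.sum_support_decompose ℳ x]
        rw [Finset.smul_sum]
      rw [hx2, map_sum]
      apply Submodule.sum_mem
      intro e hesupp
      have he0 : 0 ≤ e := by
        by_contra hneg; push_neg at hneg
        have hco : (DirectSum.decompose ℳ x e : P) ∈ (⊥ : Submodule k P) :=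
          (hvanish e hneg).le (SetLike.coe_mem _)
        exact DFinsupp.mem_support_iff.mp hesupp (Subtype.ext (by simpa using hco))
      have hmem : (DirectSum.decompose 𝒜 a d : A) • (DirectSum.decompose ℳ x e : P) ∈ ℳ ((d:ℤ) + e) :=
        hsmul d e _ _ had (SetLike.coe_mem _)
      by_cases hde : (d:ℤ) + e = (i:ℤ) + 1
      · rw [hde] at hmem
        rw [πM_same _ _ hmem]
        rcases Nat.eq_zero_or_pos d with hd0 | hd1
        · subst hd0
          have hone : (DirectSum.decompose 𝒜 a 0 : A) ∈ (1 : Submodule k A) := hA0 ▸ had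
          obtain ⟨c, hc⟩ := Submodule.mem_one.mp hone
          have he' : e = (i:ℤ) + 1 := by push_cast at hde; omega
          subst he'
          rw [← hc, algebraMap_smul]
          exact Submodule.smul_mem _ c (ihx i)
        · obtain ⟨d', rfl⟩ : ∃ d', d = d' + 1 := ⟨d - 1, by omega⟩
          have hres := hS d' e he0 _ had _ (SetLike.coe_mem (DirectSum.decompose ℳ x e))
          have harith : (d':ℤ) + e = (i:ℤ) := by push_cast at hde; omega
          rwa [harith] at hres
      · rw [πM_ne _ _ _ hmem hde]
        exact zero_mem _
  -- g kills ℳ 0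
  have hK0 : ∀ q ∈ ℳ (0:ℤ), g • q = 0 := by
    rcases Nat.eq_zero_or_pos (Nat.find hK) with h0 | hpos
    · intro q hq
      exact Nat.find_spec hK q (by rw [h0]; simpa using hq)
    · exfalso
      set j' := Nat.find hK - 1 with hj'def
      have hnotK := Nat.find_min hK (show j' < Nat.find hK by omega)
      push_neg at hnotK
      obtain ⟨p, hp, hgp⟩ := hnotK
      have hKj : ∀ q ∈ ℳ ((Nat.find hK : ℕ) : ℤ), g • q = 0 := Nat.find_spec hK
      have hw : g • p ∈ ℳ ((n:ℤ) + (j':ℤ)) := hsmul n j' g p hg hp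
      have hb0 : ∀ b ∈ 𝒜 1, ∀ x ∈ ℳ ((n:ℤ) + (j':ℤ)), b • x = 0 := by
        intro b hb x hx
        obtain ⟨c, hc⟩ := hspan1 ((n:ℤ)+(j':ℤ)) (by omega) (g • p) hw hgp x hx
        obtain ⟨c1, hc1, hcg⟩ := hconj b hb
        have hbw : b • (g • p) = 0 := by
          rw [← mul_smul, hcg, mul_smul]
          apply hKj
          have hm := hsmul 1 j' c1 p hc1 hp
          have : ((Nat.find hK : ℕ) : ℤ) = ((1:ℕ):ℤ) + (j':ℤ) := by push_cast; omega
          rw [this]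
          exact hm
        rw [hc, hsc, hbw, smul_zero]
      have hWbot : W ((n:ℤ)+(j':ℤ)) ≤ ⊥ := by
        apply Submodule.span_le.mpr
        rintro x ⟨b, hb, q, hq, rfl⟩
        simp [Submodule.mem_bot, hb0 b hb q hq]
      have hMbot : ℳ (((n + j' : ℕ):ℤ) + 1) = ⊥ := by
        rw [Submodule.eq_bot_iff]
        intro x hx
        have h1 := hC x (n + j')
        rw [πM_same _ _ hx] at h1
        have h2 : ((n + j' : ℕ):ℤ) = (n:ℤ) + (j':ℤ) := by push_cast; ring
        rw [h2] at h1
        exact (Submodule.mem_bot k).mp (hWbot h1)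
      have hfr := hdim (((n + j' : ℕ):ℤ) + 1) (by omega)
      rw [hMbot] at hfr
      simp at hfr
  -- conclude
  intro p
  have hp : p ∈ Submodule.span A (ℳ 0 : Set P) := by rw [hgen]; trivial
  induction hp using Submodule.span_induction with
  | mem x hxm => exact hK0 x hxm
  | zero => simp
  | add x y _ _ ihx ihy => rw [smul_add, ihx, ihy, add_zero]
  | smul a x _ ih =>
    obtain ⟨a', ha'⟩ := hnl a
    rw [← mul_smul, ha', mul_smul, ih, smul_zero]

/-- Let `A` be a connected ℕ-graded finitely presented `k`-algebra generated in
degree 1, `g` a homogeneous normal element of degree `n`, and `P` a point module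
over `A`. If `P` is not `g`-torsionfree, then `gP = 0`. -/
theorem stmt4 {k A : Type*} [Field k] [IsAlgClosed k] [CharZero k]
    [Ring A] [Algebra k A]
    (𝒜 : ℕ → Submodule k A) [GradedAlgebra 𝒜] (hA : IsConnGradedFP 𝒜)
    (n : ℕ) (g : A) (hg : g ∈ 𝒜 n)
    (hnl : ∀ a : A, ∃ b : A, g * a = b * g) (hnr : ∀ a : A, ∃ b : A, a * g = g * b)
    (P : Type*) [AddCommGroup P] [Module k P] [Module A P] [IsScalarTower k A P]
    (ℳ : ℤ → Submodule k P) [DirectSum.Decomposition ℳ]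
    (hsmul : ∀ (i : ℕ) (j : ℤ) (a : A) (p : P), a ∈ 𝒜 i → p ∈ ℳ j → a • p ∈ ℳ (i + j))
    (hgen : Submodule.span A (ℳ 0 : Set P) = ⊤)
    (hdim : ∀ i : ℤ, 0 ≤ i → Module.finrank k (ℳ i) = 1)
    (hvanish : ∀ i : ℤ, i < 0 → ℳ i = ⊥)
    (htor : ∃ m : P, m ≠ 0 ∧ g • m = 0) :
    ∀ p : P, g • p = 0 := by
  obtain ⟨hA0, -, hAmul, -, -⟩ := hA
  exact aux_stmt4 𝒜 hA0 hAmul n g hg hnl hnr P ℳ hsmul hgen hdim hvanish htor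
end

section
/- Let $k$ be an algebraically closed field of characteristic $0$, let $A$ be a $\mathbb{Z}$-graded $k$-algebra, and let $g = xy - uyx$ be a $q'$-Heisenberg normal element of $A$ of degree $n$ with witnesses $u \in k^{\times}$, $x \in A_1$, $y \in A_{n-1}$. Then for every integer $r \geq 1$, the identity $x^r y = r\,u^{r-1}\,xyx^{r-1} - (r-1)\,u^{r}\,yx^{r}$ holds in $A$ (where $r$ and $r-1$ denote the images of these integers in $k$). -/
/-- `g` is a `q'`-Heisenberg normal element of the `ℤ`-graded `k`-algebra `A`
(with grading `𝒜`), of degree `n ≥ 1`, with witnesses `u ∈ kˣ`, `x ∈ A₁`,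
`y ∈ A_{n-1}`. -/
def IsQHeisenbergZ {k A : Type*} [Field k] [Ring A] [Algebra k A]
    (𝒜 : ℤ → Submodule k A) (n : ℤ) (g : A) (u : kˣ) (x y : A) : Prop :=
  1 ≤ n ∧ g ∈ 𝒜 n ∧ IsRegular g ∧
    (∀ a : A, ∃ b : A, g * a = b * g) ∧ (∀ a : A, ∃ b : A, a * g = g * b) ∧
    x ∈ 𝒜 1 ∧ y ∈ 𝒜 (n - 1) ∧
    g = x * y - (u : k) • (y * x) ∧
    x * g = (u : k) • (g * x) ∧
    g * y = (u : k) • (y * g)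

/-- For a `q'`-Heisenberg normal element `g = xy - u·yx` of a `ℤ`-graded `k`-algebra `A`
and every integer `r ≥ 1`, the identity `xʳy = r·u^(r-1)·xyx^(r-1) - (r-1)·uʳ·yxʳ` holds. -/
theorem stmt6 {k A : Type*} [Field k] [IsAlgClosed k] [CharZero k]
    [Ring A] [Algebra k A]
    (𝒜 : ℤ → Submodule k A) [GradedAlgebra 𝒜]
    (n : ℤ) (g : A) (u : kˣ) (x y : A)
    (h : IsQHeisenbergZ 𝒜 n g u x y) :
    ∀ r : ℕ, 1 ≤ r →
      x ^ r * y = ((r : k) * (u : k) ^ (r - 1)) • (x * y * x ^ (r - 1)) -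
        (((r - 1 : ℕ) : k) * (u : k) ^ r) • (y * x ^ r) := by
  obtain ⟨-, -, -, -, -, -, -, hg, hx, -⟩ := h
  have hpow : ∀ m : ℕ, x ^ m * g = ((u:k) ^ m) • (g * x ^ m) := by
    intro m
    induction m with
    | zero => simp
    | succ p ih =>
      rw [pow_succ, mul_assoc, hx, mul_smul_comm, ← mul_assoc, ih, smul_mul_assoc,
        smul_smul, mul_assoc, ← pow_succ, ← pow_succ']
  have step : ∀ m : ℕ, x ^ (m+1) * y
      = ((u:k) ^ m) • (x * y * x ^ m) - ((u:k) ^ (m+1)) • (y * x ^ (m+1))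
        + (u:k) • (x ^ m * y * x) := by
    intro m
    have hxy : x * y = g + (u:k) • (y * x) := by rw [hg]; abel
    calc x ^ (m+1) * y = x ^ m * (x * y) := by rw [pow_succ, mul_assoc]
      _ = x ^ m * g + (u:k) • (x ^ m * (y * x)) := by
          rw [hxy, mul_add, mul_smul_comm]
      _ = ((u:k)^m) • (g * x ^ m) + (u:k) • (x ^ m * y * x) := by
          rw [hpow m, mul_assoc]
      _ = _ := by
          rw [hg, sub_mul, smul_mul_assoc, mul_assoc y, ← pow_succ', smul_sub,
            smul_smul, ← pow_succ]
  have key : ∀ m : ℕ, x ^ (m+1) * y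
      = (((m:k)+1) * (u:k) ^ m) • (x * y * x ^ m)
        - ((m:k) * (u:k) ^ (m+1)) • (y * x ^ (m+1)) := by
    intro m
    induction m with
    | zero => simp
    | succ p ih =>
      rw [step (p+1), ih, sub_mul, smul_mul_assoc, smul_mul_assoc,
        mul_assoc (x*y), ← pow_succ, mul_assoc y, ← pow_succ]
      push_cast
      match_scalars <;> ring
  intro r hr
  obtain ⟨m, rfl⟩ := Nat.exists_eq_add_of_le hr
  have h1 : 1 + m - 1 = m := by omega
  rw [h1, add_comm 1 m, key m]
  push_cast
  match_scalars <;> ring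
end

section
/- Let $k$ be an algebraically closed field of characteristic $0$, let $A$ be a $\mathbb{Z}$-graded $k$-algebra, and let $g = xy - uyx$ be a $q'$-Heisenberg normal element of $A$ of degree $n$ with witnesses $u \in k^{\times}$, $x \in A_1$, $y \in A_{n-1}$. Then for every integer $r \geq 1$, the identity $y x^r = r\,u^{-(r-1)}\,x^{r-1}yx - (r-1)\,u^{-r}\,x^{r}y$ holds in $A$ (where $r$ and $r-1$ denote the images of these integers in $k$). -/
section Aux
variable {k A : Type*} [Field k] [Ring A] [Algebra k A]

lemma key_rel (u : kˣ) (g x y : A)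
    (hg : g = x * y - (u : k) • (y * x))
    (hxg : x * g = (u : k) • (g * x)) :
    y * (x * x) = (2 * ((u⁻¹ : kˣ) : k)) • (x * (y * x)) -
      (((u⁻¹ : kˣ) : k) * ((u⁻¹ : kˣ) : k)) • (x * x * y) := by
  set c : k := ((u⁻¹ : kˣ) : k) with hc
  have hcu : c * (u : k) = 1 := by
    rw [hc]; exact_mod_cast u.inv_mul
  rw [hg] at hxg
  have h1 : x * (x * y) - (u : k) • (x * (y * x)) =
      (u : k) • (x * (y * x)) - ((u : k) * (u : k)) • (y * (x * x)) := by
    have := hxg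
    simp only [mul_sub, sub_mul, mul_smul_comm, smul_mul_assoc, smul_sub, smul_smul,
      mul_assoc] at this
    exact this
  have h2 : ((u : k) * (u : k)) • (y * (x * x)) =
      ((u : k) • (x * (y * x)) + (u : k) • (x * (y * x))) - x * (x * y) := by
    rw [sub_eq_sub_iff_add_eq_add] at h1
    rw [eq_sub_iff_add_eq, add_comm]
    exact h1
  have h3 := congrArg (fun z : A => (c * c) • z) h2
  simp only [smul_sub, smul_add, smul_smul] at h3
  have e1 : c * c * ((u : k) * (u : k)) = 1 := by
    calc c * c * ((u : k) * (u : k)) = (c * (u : k)) * (c * (u : k)) := by ring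
    _ = 1 := by rw [hcu]; ring
  have e2 : c * c * (u : k) = c := by
    calc c * c * (u : k) = c * (c * (u : k)) := by ring
    _ = c := by rw [hcu]; ring
  rw [e1, e2, one_smul] at h3
  rw [h3]
  simp only [← mul_assoc]
  match_scalars <;> ring

lemma aux_rel (u : kˣ) (g x y : A)
    (hg : g = x * y - (u : k) • (y * x))
    (hxg : x * g = (u : k) • (g * x)) :
    ∀ s : ℕ, y * x ^ (s + 1) =
      (((s : k) + 1) * ((u⁻¹ : kˣ) : k) ^ s) • (x ^ s * y * x) -
        ((s : k) * ((u⁻¹ : kˣ) : k) ^ (s + 1)) • (x ^ (s + 1) * y) := by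
  set c : k := ((u⁻¹ : kˣ) : k) with hc
  have key := key_rel u g x y hg hxg
  rw [← hc] at key
  intro s
  induction s with
  | zero => simp
  | succ s IH =>
    have step1 : y * x ^ (s + 1 + 1) = (y * x ^ (s + 1)) * x := by
      rw [pow_succ, ← mul_assoc]
    rw [step1, IH, sub_mul, smul_mul_assoc, smul_mul_assoc]
    have e3 : x ^ s * y * x * x = x ^ s * (y * (x * x)) := by
      simp only [mul_assoc]
    rw [e3, key]
    simp only [mul_sub, mul_smul_comm, smul_sub, smul_smul, ← mul_assoc, ← pow_succ]
    match_scalars <;> ring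

end Aux


/-- For a `q'`-Heisenberg normal element `g = xy - u·yx` of a `ℤ`-graded `k`-algebra `A`
and every integer `r ≥ 1`, the identity
`yxʳ = r·u^(-(r-1))·x^(r-1)yx - (r-1)·u^(-r)·xʳy` holds. -/
theorem stmt7 {k A : Type*} [Field k] [IsAlgClosed k] [CharZero k]
    [Ring A] [Algebra k A]
    (𝒜 : ℤ → Submodule k A) [GradedAlgebra 𝒜]
    (n : ℤ) (g : A) (u : kˣ) (x y : A)
    (h : IsQHeisenbergZ 𝒜 n g u x y) :
    ∀ r : ℕ, 1 ≤ r →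
      y * x ^ r = ((r : k) * ((u⁻¹ : kˣ) : k) ^ (r - 1)) • (x ^ (r - 1) * y * x) -
        (((r - 1 : ℕ) : k) * ((u⁻¹ : kˣ) : k) ^ r) • (x ^ r * y) := by
  obtain ⟨-, -, -, -, -, -, -, hg, hxg, -⟩ := h
  intro r hr
  obtain ⟨s, rfl⟩ := Nat.exists_eq_add_of_le hr
  have := aux_rel u g x y hg hxg s
  simpa [add_comm 1 s, Nat.add_sub_cancel, add_comm (s:k) 1] using this
end

section
/- Let $k$ be an algebraically closed field of characteristic $0$, let $A$ be a connected $\mathbb{N}$-graded finitely presented $k$-algebra generated in degree $1$, let $g = xy - uyx$ be a $q'$-Heisenberg normal element of $A$ of degree $n$ with witnesses $u \in k^{\times}$, $x \in A_1$, $y \in A_{n-1}$, let $d \geq n$, and let $P = \bigoplus_{i=0}^{d} P_i$ be a truncated $g$-torsionfree point module of length $d+1$ over $A$. Then for every $i$ with $1 \leq i \leq d-n$ and all nonzero $m_{i-1} \in P_{i-1}$ and nonzero $m_{i+n-1} \in P_{i+n-1}$: $x \cdot m_{i+n-1} = 0$ holds if and only if $x \cdot m_{i-1} = 0$ holds. 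-/
/-- `g` is a `q'`-Heisenberg normal element of the `ℕ`-graded `k`-algebra `A`
(with grading `𝒜`), of degree `n ≥ 1`, with witnesses `u ∈ kˣ`, `x ∈ A₁`,
`y ∈ A_{n-1}`: `g` is regular, homogeneous of degree `n`, normal (`gA = Ag`),
and satisfies `g = xy - u·yx`, `xg = u·gx`, `gy = u·yg`. -/
def IsQHeisenbergN {k A : Type*} [Field k] [Ring A] [Algebra k A]
    (𝒜 : ℕ → Submodule k A) (n : ℕ) (g : A) (u : kˣ) (x y : A) : Prop :=
  1 ≤ n ∧ g ∈ 𝒜 n ∧ IsRegular g ∧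
    (∀ a : A, ∃ b : A, g * a = b * g) ∧ (∀ a : A, ∃ b : A, a * g = g * b) ∧
    x ∈ 𝒜 1 ∧ y ∈ 𝒜 (n - 1) ∧
    g = x * y - (u : k) • (y * x) ∧
    x * g = (u : k) • (g * x) ∧
    g * y = (u : k) • (y * g)

/-- For a truncated `g`-torsionfree point module `P` of length `d+1` over `A`,
where `g = xy - u·yx` is a `q'`-Heisenberg normal element of degree `n`, and
`1 ≤ i ≤ d - n`: for nonzero `m_{i-1} ∈ P_{i-1}` and `m_{i+n-1} ∈ P_{i+n-1}`,
`x·m_{i+n-1} = 0 ↔ x·m_{i-1} = 0`. -/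
theorem stmt8 {k A : Type*} [Field k] [IsAlgClosed k] [CharZero k]
    [Ring A] [Algebra k A]
    (𝒜 : ℕ → Submodule k A) [GradedAlgebra 𝒜] (hA : IsConnGradedFP 𝒜)
    (n : ℕ) (g : A) (u : kˣ) (x y : A) (hqH : IsQHeisenbergN 𝒜 n g u x y)
    (P : Type*) [AddCommGroup P] [Module k P] [Module A P] [IsScalarTower k A P]
    (ℳ : ℤ → Submodule k P) [DirectSum.Decomposition ℳ]
    (hsmul : ∀ (i : ℕ) (j : ℤ) (a : A) (p : P), a ∈ 𝒜 i → p ∈ ℳ j → a • p ∈ ℳ (i + j))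
    (d : ℕ) (hd : 1 ≤ d) (hdn : n ≤ d)
    (hgen : Submodule.span A (ℳ 0 : Set P) = ⊤)
    (hdim : ∀ i : ℤ, 0 ≤ i → i ≤ (d : ℤ) → Module.finrank k (ℳ i) = 1)
    (hvanish : ∀ i : ℤ, i < 0 ∨ (d : ℤ) < i → ℳ i = ⊥)
    (htf : ∀ a : P, a ∈ (⨆ i ∈ Set.Icc (0 : ℤ) ((d : ℤ) - (n : ℤ)), ℳ i) →
      g • a = 0 → a = 0)
    (i : ℤ) (hi1 : 1 ≤ i) (hi2 : i ≤ (d : ℤ) - (n : ℤ))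
    (m₀ : P) (hm₀ : m₀ ∈ ℳ (i - 1)) (hm₀ne : m₀ ≠ 0)
    (m₁ : P) (hm₁ : m₁ ∈ ℳ (i + (n : ℤ) - 1)) (hm₁ne : m₁ ≠ 0) :
    x • m₁ = 0 ↔ x • m₀ = 0 := by
  obtain ⟨hn, hg𝒜, hreg, _, _, hx𝒜, hy𝒜, hgxy, hxg, hgy⟩ := hqH
  have hcomm : ∀ (c : k) (a : A) (p : P), a • (c • p) = c • (a • p) := fun c a p => by
    rw [← algebraMap_smul A c p, ← mul_smul, ← Algebra.commutes, mul_smul, algebraMap_smul]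
  have hmem : ∀ (j : ℤ) (p : P), 0 ≤ j → j ≤ (d : ℤ) - (n : ℤ) → p ∈ ℳ j →
      p ∈ (⨆ j ∈ Set.Icc (0 : ℤ) ((d : ℤ) - (n : ℤ)), ℳ j) := by
    intro j p h0 h1 hp
    exact Submodule.mem_iSup_of_mem j (Submodule.mem_iSup_of_mem ⟨h0, h1⟩ hp)
  have hgm₀mem : g • m₀ ∈ ℳ (i + (n : ℤ) - 1) := by
    have := hsmul n (i - 1) g m₀ hg𝒜 hm₀
    have he : (n : ℤ) + (i - 1) = i + (n : ℤ) - 1 := by ring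
    rwa [he] at this
  have hgm₀ne : g • m₀ ≠ 0 := fun h =>
    hm₀ne (htf m₀ (hmem (i - 1) m₀ (by omega) (by omega) hm₀) h)
  have hdim1 : Module.finrank k (ℳ (i + (n : ℤ) - 1)) = 1 := hdim _ (by omega) (by omega)
  set v : ℳ (i + (n : ℤ) - 1) := ⟨g • m₀, hgm₀mem⟩ with hv
  have hvne : v ≠ 0 := fun h => hgm₀ne (congrArg Subtype.val h)
  obtain ⟨c, hc⟩ := (finrank_eq_one_iff_of_nonzero' v hvne).mp hdim1 ⟨m₁, hm₁⟩
  have hcm : m₁ = c • (g • m₀) := (congrArg Subtype.val hc).symm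
  have hcne : c ≠ 0 := fun h => hm₁ne (by rw [hcm, h, zero_smul])
  have key : x • m₁ = (c * (u : k)) • (g • (x • m₀)) := by
    rw [hcm, hcomm, ← mul_smul x g m₀, hxg, smul_assoc, ← mul_smul g x m₀, ← smul_assoc,
      smul_eq_mul]
  have hxm₀mem : x • m₀ ∈ ℳ i := by
    have := hsmul 1 (i - 1) x m₀ hx𝒜 hm₀
    have he : ((1 : ℕ) : ℤ) + (i - 1) = i := by push_cast; ring
    rwa [he] at this
  constructor
  · intro h
    rw [key] at h
    rcases smul_eq_zero.mp h with h' | h'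
    · exact absurd h' (mul_ne_zero hcne u.ne_zero)
    · exact htf (x • m₀) (hmem i (x • m₀) (by omega) hi2 hxm₀mem) h'
  · intro h
    rw [key, h, smul_zero, smul_zero]
end

section
/- Let $k$ be an algebraically closed field of characteristic $0$, let $A$ be a connected $\mathbb{N}$-graded finitely presented $k$-algebra generated in degree $1$, and let $g = xy - uyx$ be a $q'$-Heisenberg normal element of $A$ of degree $n$. Then for every $d \geq 2n-1$, there exists no truncated $g$-torsionfree point module of length $d+1$ over $A$. -/
/-- If `g = xy - u·yx` is a `q'`-Heisenberg normal element of degree `n` of a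
connected ℕ-graded finitely presented `k`-algebra `A` generated in degree 1,
then for every `d ≥ 2n - 1` there exists no truncated `g`-torsionfree point
module of length `d+1` over `A`. -/
theorem stmt10 {k A : Type*} [Field k] [IsAlgClosed k] [CharZero k]
    [Ring A] [Algebra k A]
    (𝒜 : ℕ → Submodule k A) [GradedAlgebra 𝒜] (hA : IsConnGradedFP 𝒜)
    (n : ℕ) (g : A) (u : kˣ) (x y : A) (hqH : IsQHeisenbergN 𝒜 n g u x y)
    (d : ℕ) (hd : 1 ≤ d) (hdn : 2 * (n : ℤ) - 1 ≤ (d : ℤ)) :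
    ∀ (P : Type*) [AddCommGroup P] [Module k P] [Module A P] [IsScalarTower k A P]
      (ℳ : ℤ → Submodule k P) [DirectSum.Decomposition ℳ],
      (∀ (i : ℕ) (j : ℤ) (a : A) (p : P), a ∈ 𝒜 i → p ∈ ℳ j → a • p ∈ ℳ (i + j)) →
      Submodule.span A (ℳ 0 : Set P) = ⊤ →
      (∀ i : ℤ, 0 ≤ i → i ≤ (d : ℤ) → Module.finrank k (ℳ i) = 1) →
      (∀ i : ℤ, i < 0 ∨ (d : ℤ) < i → ℳ i = ⊥) →
      (∀ a : P, a ∈ (⨆ i ∈ Set.Icc (0 : ℤ) ((d : ℤ) - (n : ℤ)), ℳ i) →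
        g • a = 0 → a = 0) →
      False := by
  intro P _ _ _ _ ℳ _ hcompat hspan hrank hbot htf
  obtain ⟨hn1, hgmem, hreg, hnl, hnr, hxmem, hymem, hg, hxg, hgy⟩ := hqH
  obtain ⟨m, rfl⟩ : ∃ m : ℕ, n = m + 1 := ⟨n - 1, (Nat.succ_pred_eq_of_pos hn1).symm⟩
  rw [Nat.add_sub_cancel] at hymem
  have hd2 : 2 * (m : ℤ) + 1 ≤ (d : ℤ) := by push_cast at hdn; omega
  -- commuting of k- and A-scalar actions
  have hsc : ∀ (r : k) (a : A) (v : P), a • (r • v) = r • (a • v) := by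
    intro r a v
    rw [← algebraMap_smul A r v, ← mul_smul, ← Algebra.commutes, mul_smul, algebraMap_smul]
  -- choose basis vectors of each graded piece
  have hpex : ∀ i : ℤ, ∃ v : P, v ∈ ℳ i ∧ (∀ w ∈ ℳ i, ∃ r : k, w = r • v) ∧
      (0 ≤ i → i ≤ (d : ℤ) → v ≠ 0) := by
    intro i
    by_cases h : 0 ≤ i ∧ i ≤ (d : ℤ)
    · have h1 := hrank i h.1 h.2
      rw [finrank_eq_one_iff'] at h1
      obtain ⟨v, hv0, hvs⟩ := h1
      refine ⟨(v : P), v.2, ?_, fun _ _ h0 => hv0 (Subtype.ext h0)⟩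
      intro w hw
      obtain ⟨r, hr⟩ := hvs ⟨w, hw⟩
      exact ⟨r, by
        have hr2 := congrArg Subtype.val hr
        simpa using hr2.symm⟩
    · have hB : ℳ i = ⊥ := hbot i (by omega)
      refine ⟨0, by simp [hB], ?_, fun h1 h2 => absurd ⟨h1, h2⟩ h⟩
      intro w hw
      rw [hB] at hw
      exact ⟨0, by simpa using hw⟩
  choose p hpmem hpspan hpne using hpex
  -- the actions of x, y, g as scalars
  have hax : ∀ i : ℤ, ∃ r : k, x • p i = r • p (i + 1) := by
    intro i
    have h1 := hcompat 1 i x (p i) hxmem (hpmem i)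
    rw [show ((1 : ℕ) : ℤ) + i = i + 1 by push_cast; ring] at h1
    exact hpspan _ _ h1
  choose a ha using hax
  have hby : ∀ i : ℤ, ∃ r : k, y • p i = r • p (i + (m : ℤ)) := by
    intro i
    have h1 := hcompat m i y (p i) hymem (hpmem i)
    rw [show ((m : ℕ) : ℤ) + i = i + (m : ℤ) by ring] at h1
    exact hpspan _ _ h1
  choose b hb using hby
  have hgx : ∀ i : ℤ, ∃ r : k, g • p i = r • p (i + (m : ℤ) + 1) := by
    intro i
    have h1 := hcompat (m + 1) i g (p i) hgmem (hpmem i)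
    rw [show ((m + 1 : ℕ) : ℤ) + i = i + (m : ℤ) + 1 by push_cast; ring] at h1
    exact hpspan _ _ h1
  choose c hcg using hgx
  -- scalar uniqueness
  have huniq : ∀ (j : ℤ) (r₁ r₂ : k), 0 ≤ j → j ≤ (d : ℤ) →
      r₁ • p j = r₂ • p j → r₁ = r₂ := by
    intro j r₁ r₂ h0 h1 h
    have h2 : (r₁ - r₂) • p j = 0 := by rw [sub_smul, h, sub_self]
    rcases smul_eq_zero.mp h2 with h3 | h3
    · exact sub_eq_zero.mp h3
    · exact absurd h3 (hpne j h0 h1)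
  -- g-torsionfreeness: the scalars c i are nonzero in range
  have hcne : ∀ i : ℤ, 0 ≤ i → i + (m : ℤ) + 1 ≤ (d : ℤ) → c i ≠ 0 := by
    intro i h0 h1 hc0
    have hz : g • p i = 0 := by rw [hcg i, hc0, zero_smul]
    have hmem : p i ∈ ⨆ j ∈ Set.Icc (0 : ℤ) ((d : ℤ) - ((m + 1 : ℕ) : ℤ)), ℳ j :=
      (le_biSup ℳ (Set.mem_Icc.mpr ⟨h0, by push_cast; omega⟩)) (hpmem i)
    exact hpne i h0 (by omega) (htf (p i) hmem hz)
  -- relation from g = xy - u·yx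
  have hII : ∀ i : ℤ, 0 ≤ i → i + (m : ℤ) + 1 ≤ (d : ℤ) →
      c i = b i * a (i + (m : ℤ)) - (u : k) * (a i * b (i + 1)) := by
    intro i h0 h1
    have e1 : (x * y) • p i = (b i * a (i + (m : ℤ))) • p (i + (m : ℤ) + 1) := by
      rw [mul_smul, hb i, hsc, ha (i + (m : ℤ)), smul_smul]
    have e2 : (y * x) • p i = (a i * b (i + 1)) • p (i + (m : ℤ) + 1) := by
      rw [mul_smul, ha i, hsc, hb (i + 1), smul_smul,
        show i + 1 + (m : ℤ) = i + (m : ℤ) + 1 by ring]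
    have e3 : g • p i
        = (b i * a (i + (m : ℤ)) - (u : k) * (a i * b (i + 1))) • p (i + (m : ℤ) + 1) := by
      rw [hg, sub_smul, e1, smul_assoc, e2, smul_smul, ← sub_smul]
    rw [hcg i] at e3
    exact huniq _ _ _ (by omega) h1 e3
  -- relation from xg = u·gx
  have hIII : ∀ i : ℤ, 0 ≤ i → i + (m : ℤ) + 2 ≤ (d : ℤ) →
      c i * a (i + (m : ℤ) + 1) = (u : k) * (a i * c (i + 1)) := by
    intro i h0 h1
    have e1 : (x * g) • p i = (c i * a (i + (m : ℤ) + 1)) • p (i + (m : ℤ) + 2) := by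
      rw [mul_smul, hcg i, hsc, ha (i + (m : ℤ) + 1), smul_smul,
        show i + (m : ℤ) + 1 + 1 = i + (m : ℤ) + 2 by ring]
    have e2 : (g * x) • p i = (a i * c (i + 1)) • p (i + (m : ℤ) + 2) := by
      rw [mul_smul, ha i, hsc, hcg (i + 1), smul_smul,
        show i + 1 + (m : ℤ) + 1 = i + (m : ℤ) + 2 by ring]
    have e3 : (x * g) • p i = ((u : k) • (g * x)) • p i := by rw [hxg]
    rw [e1, smul_assoc, e2, smul_smul] at e3
    exact huniq _ _ _ (by omega) h1 e3
  -- relation from gy = u·yg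
  have hIV : ∀ i : ℤ, 0 ≤ i → i + 2 * (m : ℤ) + 1 ≤ (d : ℤ) →
      b i * c (i + (m : ℤ)) = (u : k) * (c i * b (i + (m : ℤ) + 1)) := by
    intro i h0 h1
    have e1 : (g * y) • p i = (b i * c (i + (m : ℤ))) • p (i + 2 * (m : ℤ) + 1) := by
      rw [mul_smul, hb i, hsc, hcg (i + (m : ℤ)), smul_smul,
        show i + (m : ℤ) + (m : ℤ) + 1 = i + 2 * (m : ℤ) + 1 by ring]
    have e2 : (y * g) • p i = (c i * b (i + (m : ℤ) + 1)) • p (i + 2 * (m : ℤ) + 1) := by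
      rw [mul_smul, hcg i, hsc, hb (i + (m : ℤ) + 1), smul_smul,
        show i + (m : ℤ) + 1 + (m : ℤ) = i + 2 * (m : ℤ) + 1 by ring]
    have e3 : (g * y) • p i = ((u : k) • (y * g)) • p i := by rw [hgy]
    rw [e1, smul_assoc, e2, smul_smul] at e3
    exact huniq _ _ _ (by omega) h1 e3
  -- the key induction: s_j = s_0 - j where s_j = u·a_j·b_{j+1}/c_j
  have key : ∀ j : ℕ, (j : ℤ) ≤ (m : ℤ) →
      (u : k) * a (j : ℤ) * b ((j : ℤ) + 1) * c 0
        = (u : k) * a 0 * b 1 * c (j : ℤ) - (j : k) * (c (j : ℤ) * c 0) := by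
    intro j
    induction j with
    | zero => intro _; simp
    | succ j ih =>
      intro hj
      have IH := ih (by push_cast at hj ⊢; omega)
      have h3 := hIII (j : ℤ) (by omega) (by omega)
      have h2 := hII ((j : ℤ) + 1) (by omega) (by omega)
      rw [show (j : ℤ) + 1 + (m : ℤ) = (j : ℤ) + (m : ℤ) + 1 by ring] at h2
      have hcj : c (j : ℤ) ≠ 0 := hcne (j : ℤ) (by omega) (by omega)
      push_cast
      apply mul_left_cancel₀ hcj
      linear_combination (b ((j : ℤ) + 1) * c 0) * h3 + (c (j : ℤ) * c 0) * h2
        + c ((j : ℤ) + 1) * IH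
  have KM := key m le_rfl
  have h4 := hIV 0 le_rfl (by omega)
  have h20 := hII 0 le_rfl (by omega)
  simp only [zero_add] at h4 h20
  have hc0 : c 0 ≠ 0 := hcne 0 le_rfl (by omega)
  have hcm : c (m : ℤ) ≠ 0 := hcne (m : ℤ) (by omega) (by omega)
  have final : ((m : k) + 1) * (c 0 * c (m : ℤ)) = 0 := by
    linear_combination KM + a (m : ℤ) * h4 + c (m : ℤ) * h20
  have hm1 : ((m : k) + 1) ≠ 0 := by exact_mod_cast Nat.succ_ne_zero m
  rcases mul_eq_zero.mp final with h | h
  · exact hm1 h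
  · exact mul_ne_zero hc0 hcm h
end

section
/- Let $k$ be an algebraically closed field of characteristic $0$, let $A$ be a connected $\mathbb{N}$-graded finitely presented $k$-algebra generated in degree $1$, and let $g$ be a $q'$-Heisenberg normal element of $A$ of degree $n$. Then for every $d \geq 2n-1$, every truncated point module $P$ of length $d+1$ over $A$ satisfies $gP = 0$ (so $P$ is naturally a module over $A/\langle g \rangle$). -/
/-- If `g` is a `q'`-Heisenberg normal element of degree `n` of a connected
ℕ-graded finitely presented `k`-algebra `A` generated in degree 1, then for every
`d ≥ 2n - 1`, every truncated point module `P` of length `d+1` over `A` satisfies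
`gP = 0`. -/
theorem stmt11 {k A : Type*} [Field k] [IsAlgClosed k] [CharZero k]
    [Ring A] [Algebra k A]
    (𝒜 : ℕ → Submodule k A) [GradedAlgebra 𝒜] (hA : IsConnGradedFP 𝒜)
    (n : ℕ) (g : A) (hqH : ∃ (u : kˣ) (x y : A), IsQHeisenbergN 𝒜 n g u x y)
    (d : ℕ) (hd : 1 ≤ d) (hdn : 2 * (n : ℤ) - 1 ≤ (d : ℤ))
    (P : Type*) [AddCommGroup P] [Module k P] [Module A P] [IsScalarTower k A P]
    (ℳ : ℤ → Submodule k P) [DirectSum.Decomposition ℳ]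
    (hsmul : ∀ (i : ℕ) (j : ℤ) (a : A) (p : P), a ∈ 𝒜 i → p ∈ ℳ j → a • p ∈ ℳ (i + j))
    (hgen : Submodule.span A (ℳ 0 : Set P) = ⊤)
    (hdim : ∀ i : ℤ, 0 ≤ i → i ≤ (d : ℤ) → Module.finrank k (ℳ i) = 1)
    (hvanish : ∀ i : ℤ, i < 0 ∨ (d : ℤ) < i → ℳ i = ⊥) :
    ∀ p : P, g • p = 0 := by
  classical
  obtain ⟨u, x, y, hn1, hgA, hreg, hnormR, hnormL, hxA, hyA, hgxy, hxg, hgy⟩ := hqH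
  obtain ⟨hA0, hfin, hAmul, hsurj, hpres⟩ := hA
  haveI hsc1 : SMulCommClass k A P := ⟨fun c a p => by
    calc c • a • p = (c • a) • p := (smul_assoc c a p).symm
      _ = (a * algebraMap k A c) • p := by rw [Algebra.smul_def, Algebra.commutes]
      _ = a • (algebraMap k A c) • p := mul_smul _ _ _
      _ = a • c • p := by rw [algebraMap_smul]⟩
  haveI hsc2 : SMulCommClass A k P := SMulCommClass.symm k A P
  have H1 : ∀ i : ℕ, 𝒜 (i + 1) = 𝒜 1 * 𝒜 i := by
    intro i
    induction i with
    | zero => rw [hAmul 0, hA0, one_mul, mul_one]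
    | succ i ih => rw [hAmul (i+1), ih, mul_assoc, ← hAmul i, ih]
  have He : ∀ i : ℤ, ∃ v : P, v ∈ ℳ i ∧ (0 ≤ i → i ≤ (d:ℤ) → v ≠ 0) ∧
      ∀ w ∈ ℳ i, ∃ c : k, w = c • v := by
    intro i
    by_cases hi : 0 ≤ i ∧ i ≤ (d:ℤ)
    · have h1 := hdim i hi.1 hi.2
      rw [finrank_eq_one_iff'] at h1
      obtain ⟨v, hv0, hv⟩ := h1
      refine ⟨(v:P), v.2, fun _ _ hv' => hv0 (Subtype.ext hv'), fun w hw => ?_⟩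
      obtain ⟨c, hc⟩ := hv ⟨w, hw⟩
      exact ⟨c, by simpa using (congrArg Subtype.val hc).symm⟩
    · have hbot := hvanish i (by omega)
      refine ⟨0, zero_mem _, fun h1 h2 => ((hi ⟨h1, h2⟩).elim), fun w hw => ⟨0, ?_⟩⟩
      rw [hbot] at hw
      simpa using hw
  choose e hemem hene hespan using He
  have Hα : ∀ i : ℤ, ∃ c : k, x • e i = c • e (i + 1) := by
    intro i
    obtain ⟨c, hc⟩ := hespan _ _ (hsmul 1 i x (e i) hxA (hemem i))
    exact ⟨c, by rw [hc, show ((1:ℕ):ℤ) + i = i + 1 by omega]⟩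
  have Hβ : ∀ i : ℤ, ∃ c : k, y • e i = c • e (i + n - 1) := by
    intro i
    obtain ⟨c, hc⟩ := hespan _ _ (hsmul (n-1) i y (e i) hyA (hemem i))
    exact ⟨c, by rw [hc, show (((n-1:ℕ)):ℤ) + i = i + n - 1 by omega]⟩
  have Hγ : ∀ i : ℤ, ∃ c : k, g • e i = c • e (i + n) := by
    intro i
    obtain ⟨c, hc⟩ := hespan _ _ (hsmul n i g (e i) hgA (hemem i))
    exact ⟨c, by rw [hc, show ((n:ℕ):ℤ) + i = i + n by omega]⟩
  choose α hα using Hα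
  choose β hβ using Hβ
  choose γ hγ using Hγ
  have hcancel : ∀ (c1 c2 : k) (i : ℤ), 0 ≤ i → i ≤ (d:ℤ) → c1 • e i = c2 • e i → c1 = c2 := by
    intro c1 c2 i h1 h2 h3
    have h4 : (c1 - c2) • e i = 0 := by rw [sub_smul, h3, sub_self]
    rcases smul_eq_zero.mp h4 with h5 | h5
    · exact sub_eq_zero.mp h5
    · exact absurd h5 (hene i h1 h2)
  have R1 : ∀ j : ℤ, 0 ≤ j → j + n ≤ d →
      γ j = β j * α (j + n - 1) - (u:k) * α j * β (j + 1) := by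
    intro j h0 hjd
    apply hcancel _ _ (j + n) (by omega) (by omega)
    rw [← hγ j, hgxy, sub_smul, smul_assoc, mul_smul x y, hβ j, smul_comm x (β j),
      hα (j + n - 1), show (j + (n:ℤ) - 1 + 1) = j + n by ring, smul_smul,
      mul_smul y x, hα j, smul_comm y (α j), hβ (j + 1),
      show (j + 1 + (n:ℤ) - 1) = j + n by ring, smul_smul, smul_smul, ← sub_smul]
  have R2 : ∀ j : ℤ, 0 ≤ j → j + n + 1 ≤ d →
      γ j * α (j + n) = (u:k) * α j * γ (j + 1) := by
    intro j h0 hjd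
    apply hcancel _ _ (j + n + 1) (by omega) (by omega)
    have h2 : (x * g) • e j = ((u:k) • (g * x)) • e j := by rw [hxg]
    rw [mul_smul x g, hγ j, smul_comm x (γ j), hα (j + n), smul_smul, smul_assoc,
      mul_smul g x, hα j, smul_comm g (α j), hγ (j + 1),
      show (j + 1 + (n:ℤ)) = j + n + 1 by ring, smul_smul, smul_smul] at h2
    exact h2
  have R3 : ∀ j : ℤ, 0 ≤ j → j + 2*n - 1 ≤ d →
      β j * γ (j + n - 1) = (u:k) * γ j * β (j + n) := by
    intro j h0 hjd
    apply hcancel _ _ (j + 2*n - 1) (by omega) (by omega)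
    have h2 : (g * y) • e j = ((u:k) • (y * g)) • e j := by rw [hgy]
    rw [mul_smul g y, hβ j, smul_comm g (β j), hγ (j + n - 1),
      show (j + (n:ℤ) - 1 + n) = j + 2*n - 1 by ring, smul_smul, smul_assoc,
      mul_smul y g, hγ j, smul_comm y (γ j), hβ (j + n),
      show (j + (n:ℤ) + n - 1) = j + 2*n - 1 by ring, smul_smul, smul_smul] at h2
    exact h2
  -- generation in degree 1 machinery
  let S : ℕ → Submodule k P := fun i =>
    Submodule.span k {z : P | ∃ b ∈ 𝒜 i, ∃ s ∈ ℳ 0, z = b • s}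
  have hSle : ∀ i : ℕ, S i ≤ ℳ (i : ℤ) := by
    intro i
    refine Submodule.span_le.mpr ?_
    rintro z ⟨b, hb, s, hs, rfl⟩
    have h := hsmul i 0 b s hb hs
    simpa using h
  have hSmulS : ∀ (l i : ℕ) (a : A), a ∈ 𝒜 l → ∀ p ∈ S i, a • p ∈ S (l + i) := by
    intro l i a ha p hp
    refine Submodule.span_induction ?_ ?_ ?_ ?_ hp
    · rintro z ⟨b, hb, s, hs, rfl⟩
      exact Submodule.subset_span
        ⟨a * b, SetLike.mul_mem_graded ha hb, s, hs, (mul_smul a b s).symm⟩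
    · simpa using (S (l + i)).zero_mem
    · intro p' q _ _ hp' hq'
      rw [smul_add]; exact add_mem hp' hq'
    · intro c p' _ hp'
      rw [smul_comm]; exact Submodule.smul_mem _ _ hp'
  have hTmem : ∀ p : P, p ∈ (⨆ i : ℕ, S i : Submodule k P) := by
    have hTsmul : ∀ (a : A) (p : P), p ∈ (⨆ i : ℕ, S i : Submodule k P) →
        a • p ∈ (⨆ i : ℕ, S i : Submodule k P) := by
      intro a p hp
      have hhom : ∀ (l : ℕ) (b : A), b ∈ 𝒜 l →
          b • p ∈ (⨆ i : ℕ, S i : Submodule k P) := by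
        intro l b hb
        refine Submodule.iSup_induction (motive := fun q => b • q ∈ (⨆ i : ℕ, S i : Submodule k P))
          S hp ?_ ?_ ?_
        · intro i q hq
          exact Submodule.mem_iSup_of_mem (l + i) (hSmulS l i b hb q hq)
        · simpa using Submodule.zero_mem _
        · intro q r h1 h2
          rw [smul_add]; exact add_mem h1 h2
      have hrepr : a • p = ∑ l ∈ (DirectSum.decompose 𝒜 a).support,
          (DirectSum.decompose 𝒜 a l : A) • p := by
        conv_lhs => rw [← DirectSum.sum_support_decompose 𝒜 a]
        rw [Finset.sum_smul]
      rw [hrepr]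
      exact Submodule.sum_mem _ (fun l _ => hhom l _ (SetLike.coe_mem _))
    intro p
    have h1 : p ∈ Submodule.span A (ℳ 0 : Set P) := by rw [hgen]; trivial
    let T' : Submodule A P :=
      { carrier := (⨆ i : ℕ, S i : Submodule k P)
        add_mem' := fun ha hb => add_mem ha hb
        zero_mem' := zero_mem _
        smul_mem' := fun a {p'} hp' => hTsmul a p' hp' }
    have h2 : Submodule.span A (ℳ 0 : Set P) ≤ T' := by
      refine Submodule.span_le.mpr ?_
      intro s hs
      show s ∈ (⨆ i : ℕ, S i : Submodule k P)
      exact Submodule.mem_iSup_of_mem 0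
        (Submodule.subset_span ⟨1, SetLike.one_mem_graded _, s, hs, (one_smul A s).symm⟩)
    exact h2 h1
  let π : ℤ → (P →ₗ[k] P) := fun i => (ℳ i).subtype ∘ₗ
    (DirectSum.component k ℤ (fun j => ↥(ℳ j)) i) ∘ₗ
    (DirectSum.decomposeLinearEquiv ℳ).toLinearMap
  have hπ : ∀ (i : ℤ) (p : P), π i p = ((DirectSum.decompose ℳ p) i : P) := fun i p => rfl
  have hπsame : ∀ (i : ℤ) (p : P), p ∈ ℳ i → π i p = p := fun i p hp => by
    rw [hπ]; exact DirectSum.decompose_of_mem_same ℳ hp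
  have hπne : ∀ (i j : ℤ) (p : P), p ∈ ℳ i → i ≠ j → π j p = 0 := fun i j p hp hij => by
    rw [hπ]; exact DirectSum.decompose_of_mem_ne ℳ hp hij
  have hMS : ∀ i : ℕ, ∀ p ∈ ℳ (i:ℤ), p ∈ S i := by
    intro i p hp
    have h2 : Submodule.map (π i) (⨆ l : ℕ, S l) ≤ S i := by
      rw [Submodule.map_iSup]
      apply iSup_le
      intro l
      rw [Submodule.map_le_iff_le_comap]
      intro w hw
      show π i w ∈ S i
      by_cases hl : l = i
      · subst hl
        rw [hπsame _ _ (hSle l hw)]; exact hw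
      · rw [hπne (l:ℤ) (i:ℤ) w (hSle l hw) (by exact_mod_cast hl)]
        exact zero_mem _
    have h3 : π (i:ℤ) p ∈ S i := h2 ⟨p, hTmem p, rfl⟩
    rwa [hπsame _ _ hp] at h3
  have FactG : ∀ j : ℤ, 0 ≤ j → ∀ p ∈ ℳ (j + 1),
      p ∈ Submodule.span k {z : P | ∃ v ∈ 𝒜 1, ∃ q ∈ ℳ j, z = v • q} := by
    intro j hj p hp
    obtain ⟨i, rfl⟩ : ∃ i : ℕ, (i:ℤ) = j := ⟨j.toNat, by omega⟩
    have hp' : p ∈ ℳ (((i+1 : ℕ)):ℤ) := by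
      rw [show (((i+1:ℕ)):ℤ) = (i:ℤ)+1 by omega]; exact hp
    have h2 := hMS (i+1) p hp'
    refine Submodule.span_le.mpr ?_ h2
    rintro z ⟨b, hb, s, hs, rfl⟩
    rw [H1 i] at hb
    refine Submodule.mul_induction_on (C := fun b => b • s ∈ _) hb ?_ ?_
    · intro v hv c hc
      refine Submodule.subset_span ⟨v, hv, c • s, ?_, mul_smul v c s⟩
      have := hsmul i 0 c s hc hs
      simpa using this
    · intro b1 b2 h1' h2'
      rw [add_smul]; exact add_mem h1' h2'
  let Lg : P →ₗ[k] P :=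
    { toFun := fun p => g • p
      map_add' := fun p q => smul_add g p q
      map_smul' := fun c p => smul_comm g c p }
  have S2 : ∀ j : ℤ, 1 ≤ j → g • e (j - 1) = 0 → g • e j = 0 := by
    intro j hj h0
    have h1 : e j ∈ ℳ ((j-1) + 1) := by
      rw [show (j-1)+1 = j by ring]; exact hemem j
    have h2 := FactG (j-1) (by omega) (e j) h1
    have h3 : Submodule.span k {z : P | ∃ v ∈ 𝒜 1, ∃ q ∈ ℳ (j-1), z = v • q} ≤
        LinearMap.ker Lg := by
      refine Submodule.span_le.mpr ?_
      rintro z ⟨v, hv, q, hq, rfl⟩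
      obtain ⟨b, hb⟩ := hnormR v
      obtain ⟨c, hc⟩ := hespan _ _ hq
      refine LinearMap.mem_ker.mpr ?_
      show g • (v • q) = 0
      calc g • (v • q) = (g * v) • q := (mul_smul g v q).symm
        _ = (b * g) • q := by rw [hb]
        _ = b • (g • q) := mul_smul b g q
        _ = b • (g • (c • e (j-1))) := by rw [← hc]
        _ = b • (c • (g • e (j-1))) := by rw [smul_comm g c]
        _ = 0 := by rw [h0, smul_zero, smul_zero]
    exact LinearMap.mem_ker.mp (h3 h2)
  have S1 : ∀ j : ℤ, 0 ≤ j → j + n + 1 ≤ d → g • e (j + 1) = 0 → g • e j = 0 := by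
    intro j hj hjd h1
    by_contra h2
    have hγj : γ j ≠ 0 := fun h => h2 (by rw [hγ j, h, zero_smul])
    have hz : ∀ z ∈ {z : P | ∃ v ∈ 𝒜 1, ∃ q ∈ ℳ (j + n), z = v • q}, z = 0 := by
      rintro z ⟨v, hv, q, hq, rfl⟩
      obtain ⟨c, hc⟩ := hespan _ _ hq
      have hkey : v • (g • e j) = 0 := by
        obtain ⟨b, hb⟩ := hnormL v
        have hmemD : (v * g) • e j ∈ ℳ (((1 + n : ℕ) : ℤ) + j) :=
          hsmul (1+n) j _ _ (SetLike.mul_mem_graded hv hgA) (hemem j)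
        have hsum : (v * g) • e j = ∑ l ∈ (DirectSum.decompose 𝒜 b).support,
            (g * (DirectSum.decompose 𝒜 b l : A)) • e j := by
          rw [hb]
          conv_lhs => rw [← DirectSum.sum_support_decompose 𝒜 b]
          rw [Finset.mul_sum, Finset.sum_smul]
        have hterm : ∀ l ∈ (DirectSum.decompose 𝒜 b).support,
            π (((1+n:ℕ):ℤ) + j) ((g * (DirectSum.decompose 𝒜 b l : A)) • e j) = 0 := by
          intro l _
          by_cases hl : l = 1
          · subst hl
            have hz1 : (g * (DirectSum.decompose 𝒜 b 1 : A)) • e j = 0 := by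
              rw [mul_smul]
              obtain ⟨c', hc'⟩ := hespan _ _ (hsmul 1 j _ _ (SetLike.coe_mem _) (hemem j))
              rw [hc', show ((1:ℕ):ℤ) + j = j + 1 by omega, smul_comm, h1, smul_zero]
            rw [hz1, map_zero]
          · refine hπne (((n + l : ℕ):ℤ) + j) _ _
              (hsmul (n+l) j _ _ (SetLike.mul_mem_graded hgA (SetLike.coe_mem _)) (hemem j))
              (by omega)
        have hfix : (v * g) • e j = π (((1+n:ℕ):ℤ) + j) ((v * g) • e j) :=
          (hπsame _ _ hmemD).symm
        rw [← mul_smul, hfix, hsum, map_sum, Finset.sum_eq_zero hterm]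
      have he' : e (j + n) = (γ j)⁻¹ • (g • e j) := by
        rw [hγ j, smul_smul, inv_mul_cancel₀ hγj, one_smul]
      rw [hc, he', smul_comm v c, smul_comm v ((γ j)⁻¹), hkey, smul_zero, smul_zero]
    have h5 : Submodule.span k {z : P | ∃ v ∈ 𝒜 1, ∃ q ∈ ℳ (j + n), z = v • q} ≤ ⊥ := by
      refine Submodule.span_le.mpr ?_
      intro z hzz
      show z ∈ (⊥ : Submodule k P)
      exact (Submodule.mem_bot k).mpr (hz z hzz)
    have h7 := FactG (j + n) (by omega) _ (hemem (j + n + 1))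
    exact hene (j + n + 1) (by omega) (by omega) ((Submodule.mem_bot k).mp (h5 h7))
  have hmain : ∀ j : ℤ, 0 ≤ j → j + n ≤ d → g • e j = 0 := by
    by_contra hcon
    push_neg at hcon
    obtain ⟨j0, hj00, hj0d, hj0ne⟩ := hcon
    have hdown : ∀ i : ℕ, (i:ℤ) ≤ j0 → g • e (j0 - i) ≠ 0 := by
      intro i
      induction i with
      | zero => intro _; simpa using hj0ne
      | succ i ih =>
        intro hi h2
        refine ih (by omega) ?_
        apply S2 (j0 - i) (by omega)
        rw [show j0 - (i:ℤ) - 1 = j0 - ((i+1:ℕ):ℤ) by push_cast; ring]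
        exact h2
    have h0 : g • e 0 ≠ 0 := by
      have := hdown j0.toNat (by omega)
      rwa [show j0 - (j0.toNat : ℤ) = 0 by omega] at this
    have hup : ∀ i : ℕ, (i:ℤ) + n ≤ d → g • e (i:ℤ) ≠ 0 := by
      intro i
      induction i with
      | zero => intro _; simpa using h0
      | succ i ih =>
        intro hi h2
        refine ih (by push_cast at hi ⊢; omega) ?_
        apply S1 (i:ℤ) (by omega) (by push_cast at hi; omega)
        rw [show (i:ℤ) + 1 = ((i+1:ℕ):ℤ) by push_cast; ring]
        exact h2
    have hγne : ∀ j : ℤ, 0 ≤ j → j + n ≤ d → γ j ≠ 0 := by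
      intro j h1 h2 h3
      refine hup j.toNat (by omega) ?_
      rw [show ((j.toNat:ℕ):ℤ) = j by omega, hγ j, h3, zero_smul]
    have hG0 : γ 0 ≠ 0 := hγne 0 le_rfl (by omega)
    have hG1 : γ ((n:ℤ) - 1) ≠ 0 := hγne _ (by omega) (by omega)
    have hlin : ∀ j : ℕ, (j:ℤ) ≤ (n:ℤ) - 1 →
        α ((j:ℤ) + n - 1) * β (j:ℤ) * γ 0 =
          (α ((n:ℤ) - 1) * β 0 - (j:k) * γ 0) * γ (j:ℤ) := by
      intro j
      induction j with
      | zero =>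
        intro _
        simp only [Nat.cast_zero, zero_add, zero_mul, sub_zero]
      | succ j ih =>
        intro hj
        push_cast at hj
        have ih' := ih (by omega)
        have hR2 := R2 (j:ℤ) (by omega) (by omega)
        have hR1 := R1 (j:ℤ) (by omega) (by omega)
        have hOS : α ((j:ℤ) + n) * β ((j:ℤ) + 1) * γ (j:ℤ) =
            (α ((j:ℤ) + n - 1) * β (j:ℤ) - γ (j:ℤ)) * γ ((j:ℤ) + 1) := by
          linear_combination β ((j:ℤ)+1) * hR2 + γ ((j:ℤ)+1) * hR1
        push_cast
        rw [show ((j:ℤ) + 1 + (n:ℤ) - 1) = (j:ℤ) + n by ring]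
        refine mul_left_cancel₀ (hγne (j:ℤ) (by omega) (by omega)) ?_
        linear_combination γ 0 * hOS + γ ((j:ℤ)+1) * ih'
    have hfin := hlin (n-1) (by omega)
    rw [show (((n-1:ℕ)):ℤ) = (n:ℤ) - 1 by omega,
      show ((n:ℤ) - 1 + (n:ℤ) - 1) = 2*(n:ℤ) - 2 by ring,
      show (((n-1:ℕ)):k) = (n:k) - 1 by rw [Nat.cast_sub hn1, Nat.cast_one]] at hfin
    have hR3 := R3 0 le_rfl (by omega)
    rw [show ((0:ℤ) + (n:ℤ) - 1) = (n:ℤ) - 1 by ring, show ((0:ℤ) + (n:ℤ)) = (n:ℤ) by ring] at hR3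
    have hR1' := R1 ((n:ℤ) - 1) (by omega) (by omega)
    rw [show ((n:ℤ) - 1 + (n:ℤ) - 1) = 2*(n:ℤ) - 2 by ring,
      show ((n:ℤ) - 1 + 1) = (n:ℤ) by ring] at hR1'
    have hzero : (n:k) * (γ 0 * γ ((n:ℤ) - 1)) = 0 := by
      linear_combination α ((n:ℤ)-1) * hR3 + γ 0 * hR1' + hfin
    have hnk : (n:k) = 0 := by
      rcases mul_eq_zero.mp hzero with h | h
      · exact h
      · rcases mul_eq_zero.mp h with h' | h'
        · exact absurd h' hG0
        · exact absurd h' hG1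
    exact absurd (Nat.cast_eq_zero.mp hnk) (by omega)
  have hall : ∀ (j : ℤ) (q : P), q ∈ ℳ j → g • q = 0 := by
    intro j q hq
    by_cases hcase : 0 ≤ j ∧ j + n ≤ d
    · obtain ⟨c, hc⟩ := hespan _ _ hq
      rw [hc, smul_comm g c, hmain j hcase.1 hcase.2, smul_zero]
    · by_cases hcase2 : 0 ≤ j ∧ j ≤ d
      · have h3 : g • q ∈ ℳ ((n:ℕ) + j) := hsmul n j g q hgA hq
        rw [hvanish _ (by omega)] at h3
        exact (Submodule.mem_bot k).mp h3
      · rw [hvanish j (by omega)] at hq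
        rw [(Submodule.mem_bot k).mp hq, smul_zero]
  intro p
  conv_lhs => rw [← DirectSum.sum_support_decompose ℳ p]
  rw [Finset.smul_sum]
  exact Finset.sum_eq_zero fun i _ => hall i _ (SetLike.coe_mem _)
end

section
/- Let $k$ be an algebraically closed field of characteristic $0$, let $A$ be a connected $\mathbb{N}$-graded finitely presented $k$-algebra generated in degree $1$, and let $g$ be a $q'$-Heisenberg normal element of $A$. Then every point module $P$ over $A$ satisfies $gP = 0$ (so $P$ is naturally a module over $A/\langle g \rangle$). -/
/-- If `g` is a `q'`-Heisenberg normal element of a connected ℕ-graded finitely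
presented `k`-algebra `A` generated in degree 1, then every point module `P`
over `A` satisfies `gP = 0`. -/
theorem stmt12 {k A : Type*} [Field k] [IsAlgClosed k] [CharZero k]
    [Ring A] [Algebra k A]
    (𝒜 : ℕ → Submodule k A) [GradedAlgebra 𝒜] (hA : IsConnGradedFP 𝒜)
    (g : A) (hqH : ∃ (n : ℕ) (u : kˣ) (x y : A), IsQHeisenbergN 𝒜 n g u x y)
    (P : Type*) [AddCommGroup P] [Module k P] [Module A P] [IsScalarTower k A P]
    (ℳ : ℤ → Submodule k P) [DirectSum.Decomposition ℳ]
    (hsmul : ∀ (i : ℕ) (j : ℤ) (a : A) (p : P), a ∈ 𝒜 i → p ∈ ℳ j → a • p ∈ ℳ (i + j))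
    (hgen : Submodule.span A (ℳ 0 : Set P) = ⊤)
    (hdim : ∀ i : ℤ, 0 ≤ i → Module.finrank k (ℳ i) = 1)
    (hvanish : ∀ i : ℤ, i < 0 → ℳ i = ⊥) :
    ∀ p : P, g • p = 0 := by
  classical
  obtain ⟨n, u, x, y, h1n, hgmem, -, -, hnorm2, hxmem, hymem, hrel1, hrel2, hrel3⟩ := hqH
  obtain ⟨nn, rfl⟩ : ∃ nn, n = nn + 1 := ⟨n - 1, by omega⟩
  have hymem' : y ∈ 𝒜 nn := by simpa using hymem
  have hgmem' : g ∈ 𝒜 (nn + 1) := hgmem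
  -- k-scalars commute past A-scalars
  have hcomm : ∀ (t : k) (a : A) (v : P), a • (t • v) = t • (a • v) := by
    intro t a v
    rw [← algebraMap_smul A t v, ← mul_smul, ← Algebra.commutes, mul_smul, algebraMap_smul]
  have mem' : ∀ (d e : ℕ) (a' : A), a' ∈ 𝒜 d → ∀ q : P, q ∈ ℳ (e : ℤ) →
      a' • q ∈ ℳ ((d + e : ℕ) : ℤ) := by
    intro d e a' ha q hq
    have h0 := hsmul d (e : ℤ) a' q ha hq
    have h1 : ((d + e : ℕ) : ℤ) = (d : ℤ) + (e : ℤ) := by push_cast; ring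
    rw [h1]
    exact h0
  -- choose spanning vectors of each graded piece
  have hbasis : ∀ i : ℕ, ∃ v : P, v ∈ ℳ (i : ℤ) ∧ v ≠ 0 ∧
      ∀ w ∈ ℳ (i : ℤ), ∃ t : k, w = t • v := by
    intro i
    have h1 : Module.finrank k (ℳ (i : ℤ)) = 1 := hdim i (by positivity)
    obtain ⟨v, hv0, hv⟩ := finrank_eq_one_iff'.mp h1
    refine ⟨(v : P), v.2, by simpa using hv0, ?_⟩
    intro w hw
    obtain ⟨t, ht⟩ := hv ⟨w, hw⟩
    exact ⟨t, congrArg Subtype.val ht.symm⟩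
  choose p hpmem hpnz hpspan using hbasis
  -- the structure scalars
  have hax : ∀ i : ℕ, ∃ t : k, x • p i = t • p (i + 1) := by
    intro i
    have h0 := mem' 1 i x hxmem (p i) (hpmem i)
    rw [show 1 + i = i + 1 by omega] at h0
    exact hpspan (i + 1) _ h0
  have hby : ∀ i : ℕ, ∃ t : k, y • p i = t • p (i + nn) := by
    intro i
    have h0 := mem' nn i y hymem' (p i) (hpmem i)
    rw [show nn + i = i + nn by omega] at h0
    exact hpspan (i + nn) _ h0
  have hcg : ∀ i : ℕ, ∃ t : k, g • p i = t • p (i + nn + 1) := by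
    intro i
    have h0 := mem' (nn + 1) i g hgmem' (p i) (hpmem i)
    rw [show nn + 1 + i = i + nn + 1 by omega] at h0
    exact hpspan (i + nn + 1) _ h0
  choose a ha using hax
  choose b hb using hby
  choose c hc using hcg
  -- cancellation
  have hcan : ∀ (i : ℕ) (s t : k), s • p i = t • p i → s = t := by
    intro i s t h
    have h0 : (s - t) • p i = 0 := by rw [sub_smul, h, sub_self]
    rcases smul_eq_zero.mp h0 with h' | h'
    · exact sub_eq_zero.mp h'
    · exact absurd h' (hpnz i)
  -- scalar relations
  have H1 : ∀ i : ℕ, c i = b i * a (i + nn) - (u : k) * (a i * b (i + 1)) := by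
    intro i
    apply hcan (i + nn + 1)
    have t1 : (x * y) • p i = (b i * a (i + nn)) • p (i + nn + 1) := by
      rw [mul_smul, hb i, hcomm, ha (i + nn), smul_smul]
    have t2 : (y * x) • p i = (a i * b (i + 1)) • p (i + nn + 1) := by
      rw [mul_smul, ha i, hcomm, hb (i + 1), show i + 1 + nn = i + nn + 1 by omega, smul_smul]
    calc c i • p (i + nn + 1) = g • p i := (hc i).symm
      _ = (x * y) • p i - ((u : k) • (y * x)) • p i := by rw [hrel1, sub_smul]
      _ = (b i * a (i + nn)) • p (i + nn + 1)
          - ((u : k) * (a i * b (i + 1))) • p (i + nn + 1) := by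
        rw [t1, smul_assoc, t2, smul_smul]
      _ = (b i * a (i + nn) - (u : k) * (a i * b (i + 1))) • p (i + nn + 1) := by
        rw [sub_smul]
  have H2 : ∀ i : ℕ, c i * a (i + nn + 1) = (u : k) * (a i * c (i + 1)) := by
    intro i
    apply hcan (i + nn + 2)
    have t1 : (x * g) • p i = (c i * a (i + nn + 1)) • p (i + nn + 2) := by
      rw [mul_smul, hc i, hcomm, ha (i + nn + 1), show i + nn + 1 + 1 = i + nn + 2 by omega,
        smul_smul]
    have t2 : (g * x) • p i = (a i * c (i + 1)) • p (i + nn + 2) := by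
      rw [mul_smul, ha i, hcomm, hc (i + 1), show i + 1 + nn + 1 = i + nn + 2 by omega, smul_smul]
    calc (c i * a (i + nn + 1)) • p (i + nn + 2) = (x * g) • p i := t1.symm
      _ = ((u : k) • (g * x)) • p i := by rw [hrel2]
      _ = ((u : k) * (a i * c (i + 1))) • p (i + nn + 2) := by rw [smul_assoc, t2, smul_smul]
  have H3 : ∀ i : ℕ, b i * c (i + nn) = (u : k) * (c i * b (i + nn + 1)) := by
    intro i
    apply hcan (i + nn + nn + 1)
    have t1 : (g * y) • p i = (b i * c (i + nn)) • p (i + nn + nn + 1) := by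
      rw [mul_smul, hb i, hcomm, hc (i + nn), smul_smul]
    have t2 : (y * g) • p i = (c i * b (i + nn + 1)) • p (i + nn + nn + 1) := by
      rw [mul_smul, hc i, hcomm, hb (i + nn + 1), show i + nn + 1 + nn = i + nn + nn + 1 by omega,
        smul_smul]
    calc (b i * c (i + nn)) • p (i + nn + nn + 1) = (g * y) • p i := t1.symm
      _ = ((u : k) • (y * g)) • p i := by rw [hrel3]
      _ = ((u : k) * (c i * b (i + nn + 1))) • p (i + nn + nn + 1) := by
        rw [smul_assoc, t2, smul_smul]
  -- g kills ℳ i iff c i = 0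
  have hgkill : ∀ i : ℕ, c i = 0 → ∀ q ∈ ℳ (i : ℤ), g • q = 0 := by
    intro i hci q hq
    obtain ⟨t, rfl⟩ := hpspan i q hq
    rw [hcomm, hc i, hci, zero_smul, smul_zero]
  -- the projections
  let π : ℤ → P →ₗ[k] P := fun ι => (ℳ ι).subtype ∘ₗ
    (DirectSum.component k ℤ (fun e => ↥(ℳ e)) ι) ∘ₗ
    (DirectSum.decomposeLinearEquiv ℳ).toLinearMap
  have hπdef : ∀ (ι : ℤ) (q : P), π ι q = ((DirectSum.decompose ℳ q ι : ℳ ι) : P) :=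
    fun _ _ => rfl
  have hπsame : ∀ (ι : ℤ) (q : P), q ∈ ℳ ι → π ι q = q := fun ι q hq => by
    rw [hπdef, DirectSum.decompose_of_mem_same ℳ hq]
  have hπne : ∀ (ι ι' : ℤ) (q : P), q ∈ ℳ ι' → ι' ≠ ι → π ι q = 0 := fun ι ι' q hq hne => by
    rw [hπdef, DirectSum.decompose_of_mem_ne ℳ hq hne]
  -- span lemmas
  have hVtop : ∀ w : P, w ∈ Submodule.span k
      {v : P | ∃ d : ℕ, ∃ a' ∈ 𝒜 d, ∃ r ∈ ℳ 0, v = a' • r} := by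
    set V := Submodule.span k {v : P | ∃ d : ℕ, ∃ a' ∈ 𝒜 d, ∃ r ∈ ℳ 0, v = a' • r} with hV
    have hhom : ∀ (d : ℕ) (a' : A), a' ∈ 𝒜 d → ∀ v ∈ V, a' • v ∈ V := by
      intro d a' ha' v hv
      induction hv using Submodule.span_induction with
      | mem v hv =>
        obtain ⟨e, b', hb', r, hr, rfl⟩ := hv
        rw [← mul_smul]
        exact Submodule.subset_span ⟨d + e, a' * b', SetLike.mul_mem_graded ha' hb', r, hr, rfl⟩
      | zero => rw [smul_zero]; exact zero_mem V
      | add v w _ _ ihv ihw => rw [smul_add]; exact add_mem ihv ihw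
      | smul t v _ ih => rw [hcomm]; exact Submodule.smul_mem V t ih
    have hAsmul : ∀ (a' : A) (v : P), v ∈ V → a' • v ∈ V := by
      intro a' v hv
      have heq : a' • v = ∑ d ∈ (DirectSum.decompose 𝒜 a').support,
          ((DirectSum.decompose 𝒜 a' d : 𝒜 d) : A) • v := by
        conv_lhs => rw [← DirectSum.sum_support_decompose 𝒜 a']
        rw [Finset.sum_smul]
      rw [heq]
      exact Submodule.sum_mem V fun d _ => hhom d _ (SetLike.coe_mem _) v hv
    intro w
    have hw : w ∈ Submodule.span A (ℳ 0 : Set P) := by rw [hgen]; trivial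
    induction hw using Submodule.span_induction with
    | mem v hv =>
      exact Submodule.subset_span ⟨0, 1, SetLike.one_mem_graded 𝒜, v, hv, (one_smul A v).symm⟩
    | zero => exact zero_mem V
    | add v w _ _ ihv ihw => exact add_mem ihv ihw
    | smul a' v _ ih => exact hAsmul a' v ih
  have L1 : ∀ (j : ℕ) (q : P), q ∈ ℳ (j : ℤ) → q ∈ Submodule.span k
      {v : P | ∃ a' ∈ 𝒜 j, ∃ r ∈ ℳ 0, v = a' • r} := by
    intro j q hq
    have h1 := hVtop q
    have h2 : ((DirectSum.decompose ℳ q (j : ℤ) : ℳ (j : ℤ)) : P) = q :=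
      DirectSum.decompose_of_mem_same ℳ hq
    rw [← h2]
    clear h2 hq
    induction h1 using Submodule.span_induction with
    | mem v hv =>
      obtain ⟨d, a', ha', r, hr, rfl⟩ := hv
      have hm : a' • r ∈ ℳ ((d : ℤ)) := by
        have h0 := hsmul d 0 a' r ha' hr
        simpa using h0
      by_cases hdj : (d : ℤ) = (j : ℤ)
      · rw [← hdj, DirectSum.decompose_of_mem_same ℳ hm]
        have hd : d = j := by exact_mod_cast hdj
        subst hd
        exact Submodule.subset_span ⟨a', ha', r, hr, rfl⟩
      · rw [DirectSum.decompose_of_mem_ne ℳ hm hdj]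
        exact zero_mem _
    | zero => rw [DirectSum.decompose_zero]; simp
    | add v w _ _ ihv ihw =>
      rw [DirectSum.decompose_add, DirectSum.add_apply]
      push_cast
      exact add_mem ihv ihw
    | smul t v _ ih =>
      rw [DirectSum.decompose_smul, DFinsupp.smul_apply]
      push_cast
      exact Submodule.smul_mem _ t ih
  have hpow : ∀ m : ℕ, 𝒜 (m + 1) = 𝒜 1 * 𝒜 m := by
    intro m
    induction m with
    | zero => rw [hA.1, mul_one, zero_add]
    | succ m ih => rw [hA.2.2.1 (m + 1), ih, mul_assoc, ← hA.2.2.1 m, ih]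
  have L2 : ∀ (m : ℕ) (q : P), q ∈ ℳ ((m + 1 : ℕ) : ℤ) → q ∈ Submodule.span k
      {v : P | ∃ a' ∈ 𝒜 1, ∃ r ∈ ℳ (m : ℤ), v = a' • r} := by
    intro m q hq
    have h1 := L1 (m + 1) q hq
    refine Submodule.span_le.mpr ?_ h1
    rintro v ⟨a', ha', r, hr, rfl⟩
    rw [hpow m] at ha'
    refine Submodule.mul_induction_on ha' (fun s hs t ht => ?_) (fun z w hz hw => ?_)
    · have htr : t • r ∈ ℳ (m : ℤ) := by
        have h0 := hsmul m 0 t r ht hr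
        simpa using h0
      rw [mul_smul]
      exact Submodule.subset_span ⟨s, hs, t • r, htr, rfl⟩
    · rw [add_smul]; exact add_mem hz hw
  -- upward propagation of non-vanishing
  have hstep : ∀ i : ℕ, c i ≠ 0 → c (i + 1) ≠ 0 := by
    intro i hci hci1
    have hgk1 : ∀ q ∈ ℳ ((i + 1 : ℕ) : ℤ), g • q = 0 := hgkill (i + 1) hci1
    have haakill : ∀ aa ∈ 𝒜 1, aa • (g • p i) = 0 := by
      intro aa haa
      obtain ⟨b', hb'⟩ := hnorm2 aa
      set w : P := b' • p i with hwdef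
      have hw : aa • (g • p i) = g • w := by
        rw [hwdef, ← mul_smul, hb', mul_smul]
      have hmem2 : aa • (g • p i) ∈ ℳ ((i + nn + 2 : ℕ) : ℤ) := by
        have hg1 : g • p i ∈ ℳ ((i + nn + 1 : ℕ) : ℤ) := by
          rw [hc i]
          exact Submodule.smul_mem _ _ (hpmem (i + nn + 1))
        have h0 := mem' 1 (i + nn + 1) aa haa _ hg1
        rwa [show 1 + (i + nn + 1) = i + nn + 2 by omega] at h0
      have hgw : g • w = ∑ e ∈ (DirectSum.decompose ℳ w).support,
          g • ((DirectSum.decompose ℳ w e : ℳ e) : P) := by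
        conv_lhs => rw [← DirectSum.sum_support_decompose ℳ w]
        rw [Finset.smul_sum]
      have hzero : g • w = 0 := by
        have h1 : π ((i + nn + 2 : ℕ) : ℤ) (g • w) = g • w := hπsame _ _ (hw ▸ hmem2)
        rw [← h1, hgw, map_sum]
        apply Finset.sum_eq_zero
        intro e he
        by_cases hei : e = ((i + 1 : ℕ) : ℤ)
        · subst hei
          rw [hgk1 _ (SetLike.coe_mem _), map_zero]
        · have hm : g • ((DirectSum.decompose ℳ w e : ℳ e) : P) ∈ ℳ (((nn + 1 : ℕ) : ℤ) + e) :=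
            hsmul (nn + 1) e g _ hgmem' (SetLike.coe_mem _)
          refine hπne _ _ _ hm ?_
          intro hEq
          apply hei
          push_cast at hEq ⊢
          omega
      rw [hw, hzero]
    have hkill2 : ∀ aa ∈ 𝒜 1, ∀ r ∈ ℳ ((i + nn + 1 : ℕ) : ℤ), aa • r = 0 := by
      intro aa haa r hr
      obtain ⟨t, rfl⟩ := hpspan (i + nn + 1) r hr
      have hp' : aa • p (i + nn + 1) = 0 := by
        have h1 : aa • (g • p i) = 0 := haakill aa haa
        rw [hc i, hcomm] at h1
        rcases smul_eq_zero.mp h1 with h | h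
        · exact absurd h hci
        · exact h
      rw [hcomm, hp', smul_zero]
    have hpz : p (i + nn + 2) = 0 := by
      have hq : p (i + nn + 2) ∈ ℳ (((i + nn + 1) + 1 : ℕ) : ℤ) := by
        have h0 := hpmem (i + nn + 2)
        rwa [show i + nn + 2 = (i + nn + 1) + 1 by omega] at h0
      have h1 := L2 (i + nn + 1) (p (i + nn + 2)) hq
      have h3 : Submodule.span k
          {v : P | ∃ a' ∈ 𝒜 1, ∃ r ∈ ℳ ((i + nn + 1 : ℕ) : ℤ), v = a' • r} ≤ ⊥ := by
        refine Submodule.span_le.mpr ?_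
        rintro v ⟨a', ha', r, hr, rfl⟩
        simp [hkill2 a' ha' r hr]
      simpa using h3 h1
    exact hpnz _ hpz
  -- main dichotomy
  by_cases hall : ∀ i : ℕ, c i = 0
  · intro q
    have hq : q = ∑ e ∈ (DirectSum.decompose ℳ q).support,
        ((DirectSum.decompose ℳ q e : ℳ e) : P) := (DirectSum.sum_support_decompose ℳ q).symm
    rw [hq, Finset.smul_sum]
    apply Finset.sum_eq_zero
    intro e he
    rcases lt_or_ge e 0 with h | h
    · have h0 : ((DirectSum.decompose ℳ q e : ℳ e) : P) = 0 :=
        (Submodule.mem_bot k).mp ((le_of_eq (hvanish e h)) (SetLike.coe_mem _))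
      rw [h0, smul_zero]
    · obtain ⟨i, rfl⟩ := Int.eq_ofNat_of_zero_le h
      exact hgkill i (hall i) _ (SetLike.coe_mem _)
  · push_neg at hall
    obtain ⟨m, hm⟩ := hall
    exfalso
    have hup : ∀ j : ℕ, c (m + j) ≠ 0 := by
      intro j
      induction j with
      | zero => simpa using hm
      | succ j ih =>
        have h0 := hstep (m + j) ih
        rwa [show m + j + 1 = m + (j + 1) by omega] at h0
    have hu : (u : k) ≠ 0 := Units.ne_zero u
    have huinv : (u : k) * (u : k)⁻¹ = 1 := mul_inv_cancel₀ hu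
    have R1 : ∀ j : ℕ, c (j + 1) * c j
        = (u : k) * (b (j + 1) * a j * c (j + 1) - b (j + 2) * a (j + 1) * c j) := by
      intro j
      have h1 := H1 (j + 1)
      have h2 := H2 j
      simp only [show j + 1 + nn = j + nn + 1 by omega, show j + 1 + 1 = j + 2 by omega] at h1
      linear_combination (c j) * h1 + (b (j + 1)) * h2
    have R2 : ∀ j : ℕ, c (j + 1) ≠ 0 →
        b (j + nn + 2) * a (j + nn + 1) * c j = b (j + 1) * a j * c (j + nn + 1) := by
      intro j hcj1
      have h3 := H3 (j + 1)
      have h2 := H2 j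
      simp only [show j + 1 + nn = j + nn + 1 by omega,
        show j + nn + 1 + 1 = j + nn + 2 by omega] at h3
      have key : (u : k) * c (j + 1) * (b (j + nn + 2) * a (j + nn + 1) * c j)
          = (u : k) * c (j + 1) * (b (j + 1) * a j * c (j + nn + 1)) := by
        linear_combination (-(a (j + nn + 1) * c j)) * h3 + (b (j + 1) * c (j + nn + 1)) * h2
      exact mul_left_cancel₀ (mul_ne_zero hu hcj1) key
    have S : ∀ j : ℕ, b (m + j + 1) * a (m + j) * c m
        = b (m + 1) * a m * c (m + j) - (j : k) * (u : k)⁻¹ * (c m * c (m + j)) := by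
      intro j
      induction j with
      | zero => simp
      | succ j ih =>
        have r1 := R1 (m + j)
        simp only [show m + (j + 1) = m + j + 1 by omega,
          show m + j + 1 + 1 = m + j + 2 by omega]
        push_cast
        push_cast at ih
        have hc1 : c (m + j) ≠ 0 := hup j
        apply mul_left_cancel₀ (mul_ne_zero hu hc1)
        linear_combination (c m) * r1 + ((u : k) * c (m + j + 1)) * ih
          + (c m * c (m + j) * c (m + j + 1)) * huinv
    have hkey := R2 m (hup 1)
    have s1 := S (nn + 1)
    simp only [show m + (nn + 1) = m + nn + 1 by omega,
      show m + nn + 1 + 1 = m + nn + 2 by omega] at s1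
    push_cast at s1
    have h0 : ((nn : k) + 1) * (u : k)⁻¹ * (c m * c (m + nn + 1)) = 0 := by
      linear_combination s1 - hkey
    have hcm : c m ≠ 0 := by simpa using hup 0
    have hc2 : c (m + nn + 1) ≠ 0 := by
      have h1 := hup (nn + 1)
      rwa [show m + (nn + 1) = m + nn + 1 by omega] at h1
    have huinvne : (u : k)⁻¹ ≠ 0 := inv_ne_zero hu
    have hzero : ((nn : k) + 1) = 0 := by
      rcases mul_eq_zero.mp h0 with h | h
      · rcases mul_eq_zero.mp h with h' | h'
        · exact h'
        · exact absurd h' huinvne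
      · exact absurd h (mul_ne_zero hcm hc2)
    exact Nat.cast_add_one_ne_zero nn hzero
end

section
/- Let $k$ be an algebraically closed field of characteristic $0$, let $A$ be a connected $\mathbb{N}$-graded finitely presented $k$-algebra generated in degree $1$, let $g$ be a $q'$-Heisenberg normal element of $A$, and let $c \geq 1$ be an integer. Let $M = \bigoplus_{i \in \mathbb{Z}} M_i$ be a graded $A$-module with $M = A \cdot M_0$, $\dim_k M_i = c$ for all $i \geq 0$, and $M_i = 0$ for $i < 0$. Then $M$ is not $g$-torsionfree, i.e. there exists a nonzero $m \in M$ with $gm = 0$. -/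
section Aux

variable {k A M : Type*} [Field k] [Ring A] [Algebra k A]
  [AddCommGroup M] [Module k M] [Module A M] [IsScalarTower k A M]

/-- The `k`-linear map `ℳ i → ℳ j` given by acting by a homogeneous element
`a ∈ 𝒜 d`, where `j = d + i`. -/
def actMap (𝒜 : ℕ → Submodule k A) (ℳ : ℤ → Submodule k M)
    (hsmul : ∀ (i : ℕ) (j : ℤ) (a : A) (m : M), a ∈ 𝒜 i → m ∈ ℳ j → a • m ∈ ℳ (i + j))
    (a : A) (d : ℕ) (ha : a ∈ 𝒜 d) (i j : ℤ) (h : (d : ℤ) + i = j) :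
    ℳ i →ₗ[k] ℳ j where
  toFun m := ⟨a • (m : M), h ▸ hsmul d i a m ha m.2⟩
  map_add' m₁ m₂ := by
    apply Subtype.ext
    simp [smul_add]
  map_smul' r m := by
    apply Subtype.ext
    simp only [SetLike.val_smul, RingHom.id_apply]
    rw [← algebraMap_smul A r (m : M), ← mul_smul, ← Algebra.commutes, mul_smul,
      algebraMap_smul]

@[simp] lemma actMap_apply (𝒜 : ℕ → Submodule k A) (ℳ : ℤ → Submodule k M)
    (hsmul : ∀ (i : ℕ) (j : ℤ) (a : A) (m : M), a ∈ 𝒜 i → m ∈ ℳ j → a • m ∈ ℳ (i + j))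
    (a : A) (d : ℕ) (ha : a ∈ 𝒜 d) (i j : ℤ) (h : (d : ℤ) + i = j) (m : ℳ i) :
    (actMap 𝒜 ℳ hsmul a d ha i j h m : M) = a • (m : M) := rfl

end Aux

theorem stmt13' {k A : Type*} [Field k] [CharZero k]
    [Ring A] [Algebra k A]
    (𝒜 : ℕ → Submodule k A) [GradedAlgebra 𝒜]
    (g : A) (hqH : ∃ (n : ℕ) (u : kˣ) (x y : A),
      1 ≤ n ∧ g ∈ 𝒜 n ∧
      x ∈ 𝒜 1 ∧ y ∈ 𝒜 (n - 1) ∧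
      g = x * y - (u : k) • (y * x) ∧
      x * g = (u : k) • (g * x) ∧
      g * y = (u : k) • (y * g))
    (c : ℕ) (hc : 1 ≤ c)
    (M : Type*) [AddCommGroup M] [Module k M] [Module A M] [IsScalarTower k A M]
    (ℳ : ℤ → Submodule k M)
    (hsmul : ∀ (i : ℕ) (j : ℤ) (a : A) (m : M), a ∈ 𝒜 i → m ∈ ℳ j → a • m ∈ ℳ (i + j))
    (hdim : ∀ i : ℤ, 0 ≤ i → Module.finrank k (ℳ i) = c)
    (hvanish : ∀ i : ℤ, i < 0 → ℳ i = ⊥) :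
    ∃ m : M, m ≠ 0 ∧ g • m = 0 := by
  obtain ⟨n, u, x, y, hn, hg, hx, hy, hgxy, hxg, hgy⟩ := hqH
  by_contra hcon
  push_neg at hcon
  have h0 : ∀ m : M, g • m = 0 → m = 0 := fun m hm => by
    by_contra hm0; exact hcon m hm0 hm
  have hcomm : ∀ (a : A) (r : k) (v : M), a • (r • v) = r • (a • v) := by
    intro a r v
    rw [← algebraMap_smul A r v, ← mul_smul, ← Algebra.commutes, mul_smul,
      algebraMap_smul]
  have hFD : ∀ i : ℤ, FiniteDimensional k (ℳ i) := by
    intro i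
    rcases le_or_gt 0 i with hi | hi
    · exact FiniteDimensional.of_finrank_pos (by rw [hdim i hi]; omega)
    · rw [hvanish i hi]; infer_instance
  -- injectivity of multiplication by g on each component
  have hGinj : ∀ (i j : ℤ) (h : (n : ℤ) + i = j),
      Function.Injective (actMap 𝒜 ℳ hsmul g n hg i j h) := by
    intro i j h m₁ m₂ heq
    have hval : g • (m₁ : M) = g • (m₂ : M) := by
      have := congrArg Subtype.val heq
      simpa using this
    have h' : g • ((m₁ : M) - m₂) = 0 := by rw [smul_sub, hval, sub_self]
    exact Subtype.ext (sub_eq_zero.mp (h0 _ h'))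
  have hGbij : ∀ i : ℤ, 0 ≤ i →
      Function.Bijective (actMap 𝒜 ℳ hsmul g n hg i (i + n) (by omega)) := by
    intro i hi
    haveI := hFD i; haveI := hFD (i + n)
    refine ⟨hGinj _ _ _, ?_⟩
    have hr : Module.finrank k (ℳ i) = Module.finrank k (ℳ (i + n)) := by
      rw [hdim i hi, hdim (i + n) (by omega)]
    exact (LinearMap.injective_iff_surjective_of_finrank_eq_finrank hr).mp (hGinj _ _ _)
  -- inverses of multiplication by g
  obtain ⟨Gi, hGiR, hGiL⟩ :
      ∃ Gi : ∀ i : ℤ, (ℳ (i + n) →ₗ[k] ℳ i),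
        (∀ i : ℤ, 0 ≤ i → ∀ m : ℳ (i + n), g • ((Gi i m : M)) = (m : M)) ∧
        (∀ i : ℤ, 0 ≤ i →
          Gi i ∘ₗ actMap 𝒜 ℳ hsmul g n hg i (i + n) (by omega) = LinearMap.id) := by
    refine ⟨fun i => if h : 0 ≤ i then
        ((LinearEquiv.ofBijective _ (hGbij i h)).symm : ℳ (i + n) →ₗ[k] ℳ i)
        else 0, ?_, ?_⟩
    · intro i hi m
      simp only [dif_pos hi]
      have h1 : actMap 𝒜 ℳ hsmul g n hg i (i + n) (by omega)
          ((LinearEquiv.ofBijective _ (hGbij i hi)).symm m) = m :=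
        (LinearEquiv.ofBijective _ (hGbij i hi)).apply_symm_apply m
      exact congrArg Subtype.val h1
    · intro i hi
      ext m
      simp only [dif_pos hi, LinearMap.comp_apply, LinearMap.id_apply, LinearEquiv.coe_coe]
      exact congrArg Subtype.val ((LinearEquiv.ofBijective _ (hGbij i hi)).symm_apply_apply m)
  -- the trace functions and the three key identities
  obtain ⟨a, b, h1, h2, h3⟩ :
      ∃ a b : ℤ → k,
        (∀ i : ℤ, 0 ≤ i → a i - (u : k) * b i = (c : k)) ∧
        (∀ i : ℤ, 0 ≤ i → a i = (u : k) * b (i + n - 1)) ∧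
        (∀ i : ℤ, 0 ≤ i → b i = ((u⁻¹ : kˣ) : k) * a (i + 1)) := by
    have hxy : x * y ∈ 𝒜 n := by
      have := SetLike.mul_mem_graded hx hy
      rwa [show 1 + (n - 1) = n by omega] at this
    have hyx : y * x ∈ 𝒜 n := by
      have := SetLike.mul_mem_graded hy hx
      rwa [show (n - 1) + 1 = n by omega] at this
    refine ⟨fun i => LinearMap.trace k (ℳ i)
        ((Gi i) ∘ₗ actMap 𝒜 ℳ hsmul (x * y) n hxy i (i + n) (by omega)),
      fun i => LinearMap.trace k (ℳ i)
        ((Gi i) ∘ₗ actMap 𝒜 ℳ hsmul (y * x) n hyx i (i + n) (by omega)),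
      ?_, ?_, ?_⟩
    · -- identity (1) : a i - u * b i = c
      intro i hi
      haveI := hFD i
      have hsub : actMap 𝒜 ℳ hsmul (x * y) n hxy i (i + n) (by omega)
          - (u : k) • actMap 𝒜 ℳ hsmul (y * x) n hyx i (i + n) (by omega)
          = actMap 𝒜 ℳ hsmul g n hg i (i + n) (by omega) := by
        refine LinearMap.ext fun m => Subtype.ext ?_
        simp only [LinearMap.sub_apply, LinearMap.smul_apply, AddSubgroupClass.coe_sub,
          SetLike.val_smul, actMap_apply]
        rw [hgxy, sub_smul, smul_assoc]
      have key : (Gi i ∘ₗ actMap 𝒜 ℳ hsmul (x * y) n hxy i (i + n) (by omega))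
          - (u : k) • (Gi i ∘ₗ actMap 𝒜 ℳ hsmul (y * x) n hyx i (i + n) (by omega))
          = LinearMap.id := by
        rw [← LinearMap.comp_smul, ← LinearMap.comp_sub, hsub, hGiL i hi]
      have htr := congrArg (LinearMap.trace k (ℳ i)) key
      rw [map_sub, map_smul, LinearMap.trace_id, hdim i hi, smul_eq_mul] at htr
      exact htr
    · -- identity (2) : a i = u * b (i + n - 1)
      intro i hi
      haveI := hFD i; haveI := hFD (i + n - 1); haveI := hFD (i + n)
      haveI := hFD (i + n - 1 + n)
      have hsplit : actMap 𝒜 ℳ hsmul (x * y) n hxy i (i + n) (by omega)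
          = (actMap 𝒜 ℳ hsmul x 1 hx (i + n - 1) (i + n) (by omega)) ∘ₗ
            (actMap 𝒜 ℳ hsmul y (n - 1) hy i (i + n - 1) (by omega)) := by
        refine LinearMap.ext fun m => Subtype.ext ?_
        simp only [LinearMap.comp_apply, actMap_apply]
        exact mul_smul x y (m : M)
      have hsplit2 : actMap 𝒜 ℳ hsmul (y * x) n hyx (i + n - 1) (i + n - 1 + n) (by omega)
          = (actMap 𝒜 ℳ hsmul y (n - 1) hy (i + n) (i + n - 1 + n) (by omega)) ∘ₗ
            (actMap 𝒜 ℳ hsmul x 1 hx (i + n - 1) (i + n) (by omega)) := by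
        refine LinearMap.ext fun m => Subtype.ext ?_
        simp only [LinearMap.comp_apply, actMap_apply]
        exact mul_smul y x (m : M)
      have claimC : (actMap 𝒜 ℳ hsmul y (n - 1) hy i (i + n - 1) (by omega)) ∘ₗ Gi i
          = (u : k) • ((Gi (i + n - 1)) ∘ₗ
              actMap 𝒜 ℳ hsmul y (n - 1) hy (i + n) (i + n - 1 + n) (by omega)) := by
        refine LinearMap.ext fun m => hGinj (i + n - 1) (i + n - 1 + n) (by omega) ?_
        refine Subtype.ext ?_
        simp only [LinearMap.comp_apply, LinearMap.smul_apply, SetLike.val_smul, actMap_apply]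
        rw [hcomm g, hGiR (i + n - 1) (by omega), actMap_apply,
          ← mul_smul g y, hgy, smul_assoc, mul_smul, hGiR i hi]
      calc LinearMap.trace k (ℳ i)
            ((Gi i) ∘ₗ actMap 𝒜 ℳ hsmul (x * y) n hxy i (i + n) (by omega))
          = LinearMap.trace k (ℳ i)
            (((Gi i) ∘ₗ actMap 𝒜 ℳ hsmul x 1 hx (i + n - 1) (i + n) (by omega)) ∘ₗ
              actMap 𝒜 ℳ hsmul y (n - 1) hy i (i + n - 1) (by omega)) := by
            rw [hsplit, LinearMap.comp_assoc]
        _ = LinearMap.trace k (ℳ (i + n - 1))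
            ((actMap 𝒜 ℳ hsmul y (n - 1) hy i (i + n - 1) (by omega)) ∘ₗ
              ((Gi i) ∘ₗ actMap 𝒜 ℳ hsmul x 1 hx (i + n - 1) (i + n) (by omega))) :=
            LinearMap.trace_comp_comm' _ _
        _ = LinearMap.trace k (ℳ (i + n - 1))
            (((actMap 𝒜 ℳ hsmul y (n - 1) hy i (i + n - 1) (by omega)) ∘ₗ Gi i) ∘ₗ
              actMap 𝒜 ℳ hsmul x 1 hx (i + n - 1) (i + n) (by omega)) := by
            rw [LinearMap.comp_assoc]
        _ = (u : k) * LinearMap.trace k (ℳ (i + n - 1))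
            ((Gi (i + n - 1)) ∘ₗ
              actMap 𝒜 ℳ hsmul (y * x) n hyx (i + n - 1) (i + n - 1 + n) (by omega)) := by
            rw [claimC, LinearMap.smul_comp, map_smul, smul_eq_mul, LinearMap.comp_assoc,
              ← hsplit2]
    · -- identity (3) : b i = u⁻¹ * a (i + 1)
      intro i hi
      haveI := hFD i; haveI := hFD (i + 1); haveI := hFD (i + n)
      haveI := hFD (i + 1 + n)
      have hsplit : actMap 𝒜 ℳ hsmul (y * x) n hyx i (i + n) (by omega)
          = (actMap 𝒜 ℳ hsmul y (n - 1) hy (i + 1) (i + n) (by omega)) ∘ₗ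
            (actMap 𝒜 ℳ hsmul x 1 hx i (i + 1) (by omega)) := by
        refine LinearMap.ext fun m => Subtype.ext ?_
        simp only [LinearMap.comp_apply, actMap_apply]
        exact mul_smul y x (m : M)
      have hsplit2 : actMap 𝒜 ℳ hsmul (x * y) n hxy (i + 1) (i + 1 + n) (by omega)
          = (actMap 𝒜 ℳ hsmul x 1 hx (i + n) (i + 1 + n) (by omega)) ∘ₗ
            (actMap 𝒜 ℳ hsmul y (n - 1) hy (i + 1) (i + n) (by omega)) := by
        refine LinearMap.ext fun m => Subtype.ext ?_
        simp only [LinearMap.comp_apply, actMap_apply]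
        exact mul_smul x y (m : M)
      have hgx : g * x = ((u⁻¹ : kˣ) : k) • (x * g) := by
        rw [hxg, smul_smul, Units.inv_mul, one_smul]
      have claimC : (actMap 𝒜 ℳ hsmul x 1 hx i (i + 1) (by omega)) ∘ₗ Gi i
          = ((u⁻¹ : kˣ) : k) • ((Gi (i + 1)) ∘ₗ
              actMap 𝒜 ℳ hsmul x 1 hx (i + n) (i + 1 + n) (by omega)) := by
        refine LinearMap.ext fun m => hGinj (i + 1) (i + 1 + n) (by omega) ?_
        refine Subtype.ext ?_
        simp only [LinearMap.comp_apply, LinearMap.smul_apply, SetLike.val_smul, actMap_apply]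
        rw [hcomm g, hGiR (i + 1) (by omega), actMap_apply,
          ← mul_smul g x, hgx, smul_assoc, mul_smul, hGiR i hi]
      calc LinearMap.trace k (ℳ i)
            ((Gi i) ∘ₗ actMap 𝒜 ℳ hsmul (y * x) n hyx i (i + n) (by omega))
          = LinearMap.trace k (ℳ i)
            (((Gi i) ∘ₗ actMap 𝒜 ℳ hsmul y (n - 1) hy (i + 1) (i + n) (by omega)) ∘ₗ
              actMap 𝒜 ℳ hsmul x 1 hx i (i + 1) (by omega)) := by
            rw [hsplit, LinearMap.comp_assoc]
        _ = LinearMap.trace k (ℳ (i + 1))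
            ((actMap 𝒜 ℳ hsmul x 1 hx i (i + 1) (by omega)) ∘ₗ
              ((Gi i) ∘ₗ actMap 𝒜 ℳ hsmul y (n - 1) hy (i + 1) (i + n) (by omega))) :=
            LinearMap.trace_comp_comm' _ _
        _ = LinearMap.trace k (ℳ (i + 1))
            (((actMap 𝒜 ℳ hsmul x 1 hx i (i + 1) (by omega)) ∘ₗ Gi i) ∘ₗ
              actMap 𝒜 ℳ hsmul y (n - 1) hy (i + 1) (i + n) (by omega)) := by
            rw [LinearMap.comp_assoc]
        _ = ((u⁻¹ : kˣ) : k) * LinearMap.trace k (ℳ (i + 1))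
            ((Gi (i + 1)) ∘ₗ
              actMap 𝒜 ℳ hsmul (x * y) n hxy (i + 1) (i + 1 + n) (by omega)) := by
            rw [claimC, LinearMap.smul_comp, map_smul, smul_eq_mul, LinearMap.comp_assoc,
              ← hsplit2]
  -- final arithmetic
  have hper : ∀ i : ℤ, 0 ≤ i → a i = a (i + n) := by
    intro i hi
    rw [h2 i hi, h3 (i + n - 1) (by omega), show i + (n : ℤ) - 1 + 1 = i + n by ring,
      ← mul_assoc, Units.mul_inv, one_mul]
  have hstep : ∀ i : ℤ, 0 ≤ i → a i = a (i + 1) + c := by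
    intro i hi
    have h := h1 i hi
    rw [h3 i hi, ← mul_assoc, Units.mul_inv, one_mul] at h
    linear_combination h
  have htel : ∀ m : ℕ, a 0 = a m + m * c := by
    intro m
    induction m with
    | zero => simp
    | succ t ih =>
      rw [ih, hstep t (Int.natCast_nonneg t)]
      push_cast
      ring
  have hEq : a 0 = a n + n * c := htel n
  have hper0 : a (n : ℤ) = a 0 := by
    have := hper 0 le_rfl
    rw [zero_add] at this
    exact this.symm
  rw [hper0] at hEq
  have hzero : ((n : k)) * (c : k) = 0 := by linear_combination -hEq
  rcases mul_eq_zero.mp hzero with h | h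
  · exact Nat.cast_ne_zero.mpr (by omega : n ≠ 0) h
  · exact Nat.cast_ne_zero.mpr (by omega : c ≠ 0) h

/-- If `g` is a `q'`-Heisenberg normal element of a connected ℕ-graded finitely
presented `k`-algebra `A` generated in degree 1, `c ≥ 1`, and `M` is a graded
`A`-module generated by `M₀` with `dim_k M_i = c` for `i ≥ 0` and `M_i = 0` for
`i < 0`, then `M` is not `g`-torsionfree: some nonzero `m ∈ M` has `g·m = 0`. -/
theorem stmt13 {k A : Type*} [Field k] [IsAlgClosed k] [CharZero k]
    [Ring A] [Algebra k A]
    (𝒜 : ℕ → Submodule k A) [GradedAlgebra 𝒜] (hA : IsConnGradedFP 𝒜)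
    (g : A) (hqH : ∃ (n : ℕ) (u : kˣ) (x y : A), IsQHeisenbergN 𝒜 n g u x y)
    (c : ℕ) (hc : 1 ≤ c)
    (M : Type*) [AddCommGroup M] [Module k M] [Module A M] [IsScalarTower k A M]
    (ℳ : ℤ → Submodule k M) [DirectSum.Decomposition ℳ]
    (hsmul : ∀ (i : ℕ) (j : ℤ) (a : A) (m : M), a ∈ 𝒜 i → m ∈ ℳ j → a • m ∈ ℳ (i + j))
    (hgen : Submodule.span A (ℳ 0 : Set M) = ⊤)
    (hdim : ∀ i : ℤ, 0 ≤ i → Module.finrank k (ℳ i) = c)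
    (hvanish : ∀ i : ℤ, i < 0 → ℳ i = ⊥) :
    ∃ m : M, m ≠ 0 ∧ g • m = 0 := by
  obtain ⟨n, u, x, y, hn, hg, -, -, -, hx, hy, hgxy, hxg, hgy⟩ := hqH
  exact stmt13' 𝒜 g ⟨n, u, x, y, hn, hg, hx, hy, hgxy, hxg, hgy⟩ c hc M ℳ hsmul hdim hvanish
end
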